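/- arXiv:2003.13486 — 5 statements merged into one kernel-verified Lean document; each statement's English description precedes it below -/
import Mathlib

section
/- Let (b_n)_{n∈ℕ} be a sequence of nonnegative reals with b_0 = 0 and ∑_{n=0}^∞ b_n < ∞, and let (a_n)_{n∈ℕ} be a probability mass sequence on ℕ such that a_n > 0 whenever b_n > 0. On a probability space, let ε be a real random variable with mean 0 and variance 1, let ω be a random point of 𝕊¹ with law U, and let κ be an ℕ-valued random variable with P(κ = n) = a_n, the three being mutually independent. Define, for x ∈ 𝕊¹, Z(x) = ε · √(2 b_κ / a_κ) · cos(κ · arccos(ωᵀx)) (interpreted as 0 on the event a_κ = 0). Then for every x ∈ 𝕊¹, E[Z(x)] = 0, and for every x₁, x₂ ∈ 𝕊¹, E[Z(x₁) Z(x₂)] = ∑_{n=0}^∞ b_n cos(n · arccos(x₁ᵀx₂)). -/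
open MeasureTheory Real Set
open scoped Classical

noncomputable section

/-- The Gegenbauer polynomials `G_n^λ`. -/
def Gegen (lam : ℝ) : ℕ → ℝ → ℝ
  | 0, _ => 1
  | 1, r => 2 * lam * r
  | n + 2, r =>
      2 * ((n : ℝ) + 2 + lam - 1) / ((n : ℝ) + 2) * r * Gegen lam (n + 1) r
        - ((n : ℝ) + 2 + 2 * lam - 2) / ((n : ℝ) + 2) * Gegen lam n r

/-- The unit sphere `𝕊^d ⊆ ℝ^{d+1}`. -/
abbrev Sph (d : ℕ) := Metric.sphere (0 : EuclideanSpace ℝ (Fin (d + 1))) 1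

/-- Euclidean dot product of two points of the sphere. -/
def dotS {d : ℕ} (u v : Sph d) : ℝ :=
  inner ℝ (u : EuclideanSpace ℝ (Fin (d + 1))) (v : EuclideanSpace ℝ (Fin (d + 1)))

/-- The uniform (normalized surface) probability measure on `𝕊^d`. -/
def sphereUniform (d : ℕ) : Measure (Sph d) :=
  ((volume : Measure (EuclideanSpace ℝ (Fin (d + 1)))).toSphere Set.univ)⁻¹ •
    (volume : Measure (EuclideanSpace ℝ (Fin (d + 1)))).toSphere

def eqCE : ℂ ≃ₗᵢ[ℝ] EuclideanSpace ℝ (Fin 2) := Complex.orthonormalBasisOneI.repr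

def ptC (θ : ℝ) : Sph 1 := ⟨eqCE (Real.cos θ + Real.sin θ * Complex.I), by
  rw [mem_sphere_zero_iff_norm, eqCE.norm_map, Complex.ofReal_cos,
    Complex.ofReal_sin, Complex.norm_cos_add_sin_mul_I]⟩

@[simp] lemma ptC_coe (θ : ℝ) :
    (ptC θ : EuclideanSpace ℝ (Fin 2)) = eqCE (Real.cos θ + Real.sin θ * Complex.I) := rfl

def usph (y : EuclideanSpace ℝ (Fin 2)) : Sph 1 :=
  if hy : y = 0 then ptC 0 else ⟨‖y‖⁻¹ • y, by
    rw [mem_sphere_zero_iff_norm, norm_smul, norm_inv, norm_norm,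
      inv_mul_cancel₀ (norm_ne_zero_iff.2 hy)]⟩

lemma usph_coe {y : EuclideanSpace ℝ (Fin 2)} (hy : y ≠ 0) :
    (usph y : EuclideanSpace ℝ (Fin 2)) = ‖y‖⁻¹ • y := by
  rw [usph, dif_neg hy]

def hInd : ℝ → ℝ := Set.indicator (Set.Ioc (0:ℝ) 1) (fun _ => (1:ℝ))

lemma half_int : ∫ r in Ioi (0:ℝ), r * hInd r = 1/2 := by
  have h : (fun r : ℝ => r * hInd r) = (Set.Ioc (0:ℝ) 1).indicator id := by
    funext r
    by_cases hr : r ∈ Set.Ioc (0:ℝ) 1 <;> simp [hInd, Set.indicator, hr]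
  rw [h, setIntegral_indicator measurableSet_Ioc,
    Set.inter_eq_self_of_subset_right Set.Ioc_subset_Ioi_self,
    ← intervalIntegral.integral_of_le zero_le_one]
  simpa using intervalIntegral.integral_id (a := (0:ℝ)) (b := 1)

lemma volumeIoiPow_int : ∫ r : Ioi (0:ℝ), hInd r.1 ∂(Measure.volumeIoiPow 1) = 1/2 := by
  rw [Measure.volumeIoiPow]
  simp only [ENNReal.ofReal]
  rw [integral_withDensity_eq_integral_smul
    ((measurable_subtype_coe.pow_const 1).real_toNNReal),
    integral_subtype_comap measurableSet_Ioi (fun a => (a ^ 1).toNNReal • hInd a)]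
  rw [setIntegral_congr_fun measurableSet_Ioi (g := fun r => r * hInd r) (fun r hr => by
    rw [NNReal.smul_def, Real.coe_toNNReal _ (pow_nonneg hr.out.le _), pow_one, smul_eq_mul])]
  exact half_int

lemma integral_toSphere_circle (f : Sph 1 → ℝ) :
    ∫ v, f v ∂((volume : Measure (EuclideanSpace ℝ (Fin 2))).toSphere)
      = ∫ θ in Ioo (-π) π, f (ptC θ) := by
  set E2 := EuclideanSpace ℝ (Fin 2)
  set μ : Measure E2 := volume with hμ
  set G : E2 → ℝ := fun y => f (usph y) * hInd ‖y‖ with hG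
  have hdim : Module.finrank ℝ E2 - 1 = 1 := by
    rw [finrank_euclideanSpace_fin]
  have key : (∫ v, f v ∂μ.toSphere) * (1/2) = (1/2) * ∫ θ in Ioo (-π) π, f (ptC θ) := by
    calc (∫ v, f v ∂μ.toSphere) * (1/2)
        = (∫ v, f v ∂μ.toSphere) * ∫ r : Ioi (0:ℝ), hInd r.1 ∂(Measure.volumeIoiPow 1) := by
          rw [volumeIoiPow_int]
      _ = ∫ p : Sph 1 × Ioi (0:ℝ), f p.1 * hInd p.2.1
            ∂(μ.toSphere.prod (Measure.volumeIoiPow (Module.finrank ℝ E2 - 1))) := by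
          rw [hdim]
          exact (integral_prod_mul f (fun r : Ioi (0:ℝ) => hInd r.1)).symm
      _ = ∫ x : ({0}ᶜ : Set E2), f (homeomorphUnitSphereProd E2 x).1 *
            hInd ((homeomorphUnitSphereProd E2 x).2 : ℝ) ∂(μ.comap Subtype.val) :=
          ((μ.measurePreserving_homeomorphUnitSphereProd).integral_comp
            (Homeomorph.measurableEmbedding _) (fun p => f p.1 * hInd p.2.1)).symm
      _ = ∫ x : ({0}ᶜ : Set E2), G x.1 ∂(μ.comap Subtype.val) := by
          refine integral_congr_ae (Filter.Eventually.of_forall fun x => ?_)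
          have hx : (x : E2) ≠ 0 := x.2
          have h1 : (homeomorphUnitSphereProd E2 x).1 = usph (x : E2) := by
            apply Subtype.ext
            rw [usph_coe hx]
            simp
          have h2 : ((homeomorphUnitSphereProd E2 x).2 : ℝ) = ‖(x : E2)‖ := by simp
          rw [hG]
          simp only [h1, h2]
      _ = ∫ y in ({(0:E2)}ᶜ), G y ∂μ :=
          integral_subtype_comap (measurableSet_singleton _).compl G
      _ = ∫ y, G y ∂μ := by rw [restrict_compl_singleton]
      _ = ∫ z : ℂ, G (eqCE z) := by
          rw [(eqCE.measurePreserving.integral_comp eqCE.toHomeomorph.measurableEmbedding G)]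
      _ = ∫ p in polarCoord.target, p.1 • G (eqCE (Complex.polarCoord.symm p)) :=
          (Complex.integral_comp_polarCoord_symm (fun z => G (eqCE z))).symm
      _ = ∫ p in Ioi (0:ℝ) ×ˢ Ioo (-π) π, (p.1 * hInd p.1) * f (ptC p.2) := by
          rw [polarCoord_target]
          refine setIntegral_congr_fun (measurableSet_Ioi.prod measurableSet_Ioo)
            (fun p hp => ?_)
          obtain ⟨hp1, hp2⟩ := hp
          have hp1' : (0:ℝ) < p.1 := hp1
          have hz : Complex.polarCoord.symm p ≠ 0 := by
            intro h
            have := Complex.norm_polarCoord_symm p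
            rw [h] at this
            simp only [norm_zero] at this
            rw [abs_of_pos hp1'] at this
            exact hp1'.ne this
          have hzn : ‖Complex.polarCoord.symm p‖ = p.1 := by
            rw [Complex.norm_polarCoord_symm, abs_of_pos hp1']
          have heq : eqCE (Complex.polarCoord.symm p) ≠ 0 := fun h =>
            hz (eqCE.injective (by rw [h, map_zero]))
          have hns : ‖eqCE (Complex.polarCoord.symm p)‖ = p.1 := by
            rw [eqCE.norm_map, hzn]
          have harg : usph (eqCE (Complex.polarCoord.symm p)) = ptC p.2 := by
            apply Subtype.ext
            rw [usph_coe heq, ptC_coe, hns, ← eqCE.map_smul]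
            congr 1
            rw [Complex.polarCoord_symm_apply, Complex.real_smul, Complex.ofReal_inv, ← mul_assoc,
              inv_mul_cancel₀ (by exact_mod_cast hp1'.ne'), one_mul]
          rw [hG]
          simp only [harg, hns]
          rw [smul_eq_mul]
          ring
      _ = (∫ r in Ioi (0:ℝ), r * hInd r) * ∫ θ in Ioo (-π) π, f (ptC θ) := by
          rw [Measure.volume_eq_prod, ← Measure.prod_restrict,
            integral_prod_mul (fun r => r * hInd r) (fun θ => f (ptC θ))]
      _ = (1/2) * ∫ θ in Ioo (-π) π, f (ptC θ) := by rw [half_int]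
  linarith

lemma toSphere_univ_circle :
    (volume : Measure (EuclideanSpace ℝ (Fin 2))).toSphere Set.univ = ENNReal.ofReal (2 * π) := by
  rw [Measure.toSphere_apply_univ]
  have hball : (volume : Measure (EuclideanSpace ℝ (Fin 2))) (Metric.ball 0 1)
      = ENNReal.ofReal π := by
    have hpre : eqCE ⁻¹' (Metric.ball (0 : EuclideanSpace ℝ (Fin 2)) 1)
        = Metric.ball (0:ℂ) 1 := by
      ext z
      simp [Metric.mem_ball, dist_zero_right, eqCE.norm_map]
    have := eqCE.measurePreserving.measure_preimage
      (measurableSet_ball (x := (0 : EuclideanSpace ℝ (Fin 2))) (ε := 1)).nullMeasurableSet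
    rw [hpre] at this
    rw [← this, Complex.volume_ball, ← NNReal.coe_real_pi, ENNReal.ofReal_coe_nnreal]
    simp
  rw [hball, finrank_euclideanSpace_fin,
    show ((2:ℕ):ENNReal) = ENNReal.ofReal 2 by simp,
    ← ENNReal.ofReal_mul (by norm_num : (0:ℝ) ≤ 2)]

lemma integral_sphereUniform (f : Sph 1 → ℝ) :
    ∫ v, f v ∂(sphereUniform 1) = (2*π)⁻¹ * ∫ θ in Ioo (-π) π, f (ptC θ) := by
  rw [sphereUniform, integral_smul_measure, toSphere_univ_circle, integral_toSphere_circle,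
    ENNReal.toReal_inv, ENNReal.toReal_ofReal (by positivity), smul_eq_mul]

lemma sphereUniform_one : ∫ v, (1:ℝ) ∂(sphereUniform 1) = 1 := by
  rw [integral_sphereUniform]
  rw [setIntegral_const, measureReal_def, Real.volume_Ioo, smul_eq_mul, mul_one,
    ENNReal.toReal_ofReal (by linarith [pi_pos])]
  have : π - -π = 2 * π := by ring
  rw [this, inv_mul_cancel₀ (by positivity)]

-- inner product on the circle
lemma circ_inner (α : ℝ) (ξ : ℂ) :
    (inner ℝ ((Real.cos α : ℂ) + (Real.sin α : ℂ) * Complex.I) ξ : ℝ)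
      = Real.cos α * ξ.re + Real.sin α * ξ.im := by
  rw [Complex.inner]
  simp [Complex.mul_re, Complex.cos_ofReal_re, Complex.sin_ofReal_re]
  ring

lemma sphere_coe_eq (x : Sph 1) :
    (x : EuclideanSpace ℝ (Fin 2)) = eqCE ((Real.cos (eqCE.symm (x : EuclideanSpace ℝ (Fin 2))).arg : ℂ)
      + (Real.sin (eqCE.symm (x : EuclideanSpace ℝ (Fin 2))).arg : ℂ) * Complex.I) := by
  set ξ := eqCE.symm (x : EuclideanSpace ℝ (Fin 2)) with hξdef
  have hξ : ‖ξ‖ = 1 := by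
    rw [hξdef, eqCE.symm.norm_map,
      mem_sphere_zero_iff_norm.mp x.2]
  have h2 : ((Real.cos ξ.arg : ℂ) + (Real.sin ξ.arg : ℂ) * Complex.I) = ξ := by
    have := Complex.norm_mul_cos_add_sin_mul_I ξ
    rw [hξ] at this
    simpa [Complex.ofReal_cos, Complex.ofReal_sin] using this
  rw [h2, hξdef, eqCE.apply_symm_apply]

lemma dot_ptC (θ : ℝ) (x : Sph 1) :
    dotS (ptC θ) x = Real.cos (θ - (eqCE.symm (x : EuclideanSpace ℝ (Fin 2))).arg) := by
  set φ := (eqCE.symm (x : EuclideanSpace ℝ (Fin 2))).arg with hφ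
  rw [dotS, ptC_coe, sphere_coe_eq x, ← hφ, eqCE.inner_map_map, circ_inner]
  simp [Real.cos_sub, Complex.cos_ofReal_re, Complex.sin_ofReal_re]

lemma dot_angles (x y : Sph 1) :
    dotS x y = Real.cos ((eqCE.symm (x : EuclideanSpace ℝ (Fin 2))).arg
      - (eqCE.symm (y : EuclideanSpace ℝ (Fin 2))).arg) := by
  rw [dotS]
  conv_lhs => rw [sphere_coe_eq x, sphere_coe_eq y]
  rw [eqCE.inner_map_map, circ_inner]
  simp [Real.cos_sub, Complex.cos_ofReal_re, Complex.sin_ofReal_re]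

-- Chebyshev trick
lemma cos_nat_mul_arccos_cos (n : ℕ) (s : ℝ) :
    Real.cos (n * Real.arccos (Real.cos s)) = Real.cos (n * s) := by
  have h1 := Polynomial.Chebyshev.T_real_cos (Real.arccos (Real.cos s)) n
  have h2 := Polynomial.Chebyshev.T_real_cos s n
  rw [Real.cos_arccos (Real.neg_one_le_cos s) (Real.cos_le_one s)] at h1
  have := h1.symm.trans h2
  exact_mod_cast this

-- the trig integral
lemma trig_int (n : ℕ) (hn : n ≠ 0) (φ₁ φ₂ : ℝ) :
    ∫ θ in Ioo (-π) π, Real.cos (n*(θ-φ₁)) * Real.cos (n*(θ-φ₂))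
      = π * Real.cos (n*(φ₁-φ₂)) := by
  have hle : (-π:ℝ) ≤ π := by linarith [pi_pos]
  rw [← integral_Ioc_eq_integral_Ioo, ← intervalIntegral.integral_of_le hle]
  have key : ∀ θ : ℝ, Real.cos (n*(θ-φ₁)) * Real.cos (n*(θ-φ₂))
      = Real.cos ((2*(n:ℝ))*θ + (-((n:ℝ)*(φ₁+φ₂))))/2 + Real.cos ((n:ℝ)*(φ₁-φ₂))/2 := by
    intro θ
    have e1 : (2*(n:ℝ))*θ + (-((n:ℝ)*(φ₁+φ₂))) = ((n:ℝ)*(θ-φ₁)) + ((n:ℝ)*(θ-φ₂)) := by ring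
    have e2 : (n:ℝ)*(φ₁-φ₂) = ((n:ℝ)*(θ-φ₂)) - ((n:ℝ)*(θ-φ₁)) := by ring
    rw [e1, e2, Real.cos_add, Real.cos_sub]
    ring
  rw [intervalIntegral.integral_congr (g := fun θ =>
      Real.cos ((2*(n:ℝ))*θ + (-((n:ℝ)*(φ₁+φ₂))))/2 + Real.cos ((n:ℝ)*(φ₁-φ₂))/2)
      (fun θ _ => key θ)]
  have hc : (2*(n:ℝ)) ≠ 0 := by
    have : (n:ℝ) ≠ 0 := Nat.cast_ne_zero.mpr hn
    positivity
  have i1 : IntervalIntegrable (fun θ : ℝ =>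
      Real.cos ((2*(n:ℝ))*θ + (-((n:ℝ)*(φ₁+φ₂))))/2) volume (-π) π := by
    apply Continuous.intervalIntegrable
    fun_prop
  have i2 : IntervalIntegrable (fun _ : ℝ => Real.cos ((n:ℝ)*(φ₁-φ₂))/2) volume (-π) π :=
    intervalIntegrable_const
  rw [intervalIntegral.integral_add i1 i2]
  have hz : (∫ θ in (-π)..π, Real.cos ((2*(n:ℝ))*θ + (-((n:ℝ)*(φ₁+φ₂))))/2) = 0 := by
    rw [intervalIntegral.integral_div,
      intervalIntegral.integral_comp_mul_add Real.cos hc (-((n:ℝ)*(φ₁+φ₂))),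
      integral_cos]
    have e3 : (2*(n:ℝ))*π + (-((n:ℝ)*(φ₁+φ₂))) = (-((n:ℝ)*(φ₁+φ₂))) + (n:ℤ)*(2*π) := by
      push_cast; ring
    have e4 : (2*(n:ℝ))*(-π) + (-((n:ℝ)*(φ₁+φ₂))) = (-((n:ℝ)*(φ₁+φ₂))) + ((-(n:ℤ)):ℝ)*(2*π) := by
      push_cast; ring
    rw [e3, e4, Real.sin_add_int_mul_two_pi]
    have h4 : Real.sin (-((n:ℝ)*(φ₁+φ₂)) + ((-(n:ℤ)):ℝ) * (2*π)) = Real.sin (-((n:ℝ)*(φ₁+φ₂))) := by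
      have := Real.sin_add_int_mul_two_pi (-((n:ℝ)*(φ₁+φ₂))) (-(n:ℤ))
      push_cast at this ⊢
      exact this
    push_cast at h4 ⊢
    rw [h4]
    simp
  rw [hz, intervalIntegral.integral_const, zero_add, smul_eq_mul]
  have : π - -π = 2 * π := by ring
  rw [this]
  ring

lemma sphere_cos_int (n : ℕ) (hn : n ≠ 0) (x₁ x₂ : Sph 1) :
    ∫ v, Real.cos (n * Real.arccos (dotS v x₁)) * Real.cos (n * Real.arccos (dotS v x₂))
        ∂(sphereUniform 1)
      = (1/2) * Real.cos (n * Real.arccos (dotS x₁ x₂)) := by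
  set φ₁ := (eqCE.symm (x₁ : EuclideanSpace ℝ (Fin 2))).arg with hφ₁
  set φ₂ := (eqCE.symm (x₂ : EuclideanSpace ℝ (Fin 2))).arg with hφ₂
  rw [integral_sphereUniform]
  have hpt : ∀ θ : ℝ, Real.cos (n * Real.arccos (dotS (ptC θ) x₁))
      * Real.cos (n * Real.arccos (dotS (ptC θ) x₂))
      = Real.cos ((n:ℝ)*(θ-φ₁)) * Real.cos ((n:ℝ)*(θ-φ₂)) := by
    intro θ
    rw [dot_ptC, dot_ptC, ← hφ₁, ← hφ₂, cos_nat_mul_arccos_cos, cos_nat_mul_arccos_cos]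
  rw [setIntegral_congr_fun measurableSet_Ioo (fun θ _ => hpt θ), trig_int n hn]
  have : Real.cos ((n:ℝ) * Real.arccos (dotS x₁ x₂)) = Real.cos ((n:ℝ)*(φ₁-φ₂)) := by
    rw [dot_angles, ← hφ₁, ← hφ₂, cos_nat_mul_arccos_cos]
  rw [this]
  have hπ : π ≠ 0 := by positivity
  field_simp
/-- Proposition 1 (case d = 1): the turning-arcs basic random field on the circle has zero
mean and covariance with isotropic part given by the Schoenberg (Chebyshev) expansion. -/
theorem turning_arcs_scalar_circle
    (b : ℕ → ℝ) (hb : ∀ n, 0 ≤ b n) (hb0 : b 0 = 0) (hbsum : Summable b)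
    (a : ℕ → ℝ) (ha : ∀ n, 0 ≤ a n) (ha1 : ∑' n, a n = 1)
    (hab : ∀ n, 0 < b n → 0 < a n)
    {Ω : Type*} [MeasurableSpace Ω] (P : Measure Ω) [IsProbabilityMeasure P]
    (ε : Ω → ℝ) (w : Ω → Sph 1) (κ : Ω → ℕ)
    (hεm : Measurable ε) (hwm : Measurable w) (hκm : Measurable κ)
    (hεint : Integrable ε P) (hεmean : ∫ t, ε t ∂P = 0)
    (hεsq : Integrable (fun t => ε t ^ 2) P) (hεvar : ∫ t, ε t ^ 2 ∂P = 1)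
    (hwlaw : P.map w = sphereUniform 1)
    (hκlaw : ∀ n, P {t | κ t = n} = ENNReal.ofReal (a n))
    (hindep : P.map (fun t => (ε t, w t, κ t))
      = (P.map ε).prod ((P.map w).prod (P.map κ)))
    (Z : Sph 1 → Ω → ℝ)
    (hZ : ∀ x t, Z x t =
      if a (κ t) = 0 then 0
      else ε t * Real.sqrt (2 * b (κ t) / a (κ t)) *
        Real.cos ((κ t : ℝ) * Real.arccos (dotS (w t) x))) :
    (∀ x : Sph 1, ∫ t, Z x t ∂P = 0) ∧
    (∀ x₁ x₂ : Sph 1, ∫ t, Z x₁ t * Z x₂ t ∂P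
        = ∑' n : ℕ, b n * Real.cos ((n : ℝ) * Real.arccos (dotS x₁ x₂))) := by
  classical
  haveI hPe : IsProbabilityMeasure (P.map ε) := Measure.isProbabilityMeasure_map hεm.aemeasurable
  haveI hPw : IsProbabilityMeasure (P.map w) := Measure.isProbabilityMeasure_map hwm.aemeasurable
  haveI hPκ : IsProbabilityMeasure (P.map κ) := Measure.isProbabilityMeasure_map hκm.aemeasurable
  haveI hSU : IsProbabilityMeasure (sphereUniform 1) := hwlaw ▸ hPw
  set c : ℕ → ℝ := fun n => if a n = 0 then 0 else Real.sqrt (2 * b n / a n) with hc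
  have hκs : ∀ n, (P.map κ) {n} = ENNReal.ofReal (a n) := fun n => by
    rw [Measure.map_apply hκm (measurableSet_singleton n)]
    exact hκlaw n
  have hb0' : ∀ n, a n = 0 → b n = 0 := fun n h => by
    by_contra h'
    have hbn : 0 < b n := (hb n).lt_of_ne (Ne.symm h')
    have := hab n hbn
    rw [h] at this
    exact lt_irrefl 0 this
  have htup : Measurable fun t => (ε t, w t, κ t) := hεm.prodMk (hwm.prodMk hκm)
  have hdotm : ∀ x : Sph 1, Measurable fun q : (Sph 1) × ℕ =>
      Real.cos ((q.2 : ℝ) * Real.arccos (dotS q.1 x)) := fun x => by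
    apply Real.measurable_cos.comp
    apply Measurable.mul
    · exact (measurable_from_nat (f := fun n : ℕ => (n : ℝ))).comp measurable_snd
    · have hcont : Continuous fun v : Sph 1 => Real.arccos (dotS v x) :=
        Real.continuous_arccos.comp (by unfold dotS; exact continuous_subtype_val.inner continuous_const)
      exact hcont.measurable.comp measurable_fst
  constructor
  · -- zero mean
    intro x
    set g : (Sph 1) × ℕ → ℝ := fun q =>
      c q.2 * Real.cos ((q.2 : ℝ) * Real.arccos (dotS q.1 x)) with hg
    have hgm : Measurable g :=
      ((measurable_from_nat (f := c)).comp measurable_snd).mul (hdotm x)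
    have hFm : Measurable fun z : ℝ × ((Sph 1) × ℕ) => z.1 * g z.2 :=
      measurable_fst.mul (hgm.comp measurable_snd)
    have hZF : ∀ t, Z x t = ε t * g (w t, κ t) := fun t => by
      rw [hZ]
      by_cases h : a (κ t) = 0
      · simp [hg, hc, h]
      · simp only [hg, hc, if_neg h]
        ring
    calc ∫ t, Z x t ∂P = ∫ t, ε t * g (w t, κ t) ∂P :=
          integral_congr_ae (Filter.Eventually.of_forall hZF)
      _ = ∫ z : ℝ × ((Sph 1) × ℕ), z.1 * g z.2 ∂(P.map fun t => (ε t, w t, κ t)) :=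
          (integral_map htup.aemeasurable hFm.aestronglyMeasurable).symm
      _ = ∫ z : ℝ × ((Sph 1) × ℕ), z.1 * g z.2
            ∂((P.map ε).prod ((P.map w).prod (P.map κ))) := by rw [hindep]
      _ = (∫ r : ℝ, r ∂(P.map ε)) * ∫ q, g q ∂((P.map w).prod (P.map κ)) :=
          integral_prod_mul (fun r : ℝ => r) g
      _ = 0 := by
          have hmean : ∫ r : ℝ, r ∂(P.map ε) = 0 := by
            have : ∫ r : ℝ, r ∂(P.map ε) = ∫ t, ε t ∂P :=
              integral_map hεm.aemeasurable aestronglyMeasurable_id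
            rw [this, hεmean]
          rw [hmean, zero_mul]
  · -- covariance
    intro x₁ x₂
    set K : (Sph 1) × ℕ → ℝ := fun q => (c q.2)^2 *
      (Real.cos ((q.2 : ℝ) * Real.arccos (dotS q.1 x₁)) *
        Real.cos ((q.2 : ℝ) * Real.arccos (dotS q.1 x₂))) with hK
    have hKm : Measurable K :=
      ((measurable_from_nat (f := fun n => (c n)^2)).comp measurable_snd).mul
        ((hdotm x₁).mul (hdotm x₂))
    have hFm : Measurable fun z : ℝ × ((Sph 1) × ℕ) => z.1^2 * K z.2 :=
      (measurable_fst.pow_const 2).mul (hKm.comp measurable_snd)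
    have hZZ : ∀ t, Z x₁ t * Z x₂ t = (ε t)^2 * K (w t, κ t) := fun t => by
      rw [hZ, hZ]
      by_cases h : a (κ t) = 0
      · simp [hK, hc, h]
      · simp only [hK, hc, if_neg h]
        ring
    have hcn2 : ∀ n, (c n)^2 * a n = 2 * b n := fun n => by
      by_cases h : a n = 0
      · simp [hc, h, hb0' n h]
      · rw [hc]
        simp only [if_neg h]
        rw [sq_sqrt (div_nonneg (by linarith [hb n]) (ha n)), div_mul_cancel₀ _ h]
    have hKint : Integrable K ((sphereUniform 1).prod (P.map κ)) := by
      refine ⟨hKm.aestronglyMeasurable, ?_⟩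
      have hb1 : ∀ q : (Sph 1) × ℕ, (‖K q‖₊ : ENNReal) ≤ ENNReal.ofReal ((c q.2)^2) := by
        intro q
        rw [← enorm_eq_nnnorm, Real.enorm_eq_ofReal_abs]
        apply ENNReal.ofReal_le_ofReal
        rw [hK, abs_mul, abs_of_nonneg (sq_nonneg _)]
        have h1 : |Real.cos ((q.2 : ℝ) * Real.arccos (dotS q.1 x₁)) *
            Real.cos ((q.2 : ℝ) * Real.arccos (dotS q.1 x₂))| ≤ 1 := by
          rw [abs_mul]
          exact mul_le_one₀ (Real.abs_cos_le_one _) (abs_nonneg _) (Real.abs_cos_le_one _)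
        exact mul_le_of_le_one_right (sq_nonneg _) h1
      have hfin : (∫⁻ q, ‖K q‖₊ ∂((sphereUniform 1).prod (P.map κ))) < ⊤ := by
        calc ∫⁻ q, (‖K q‖₊ : ENNReal) ∂((sphereUniform 1).prod (P.map κ))
            ≤ ∫⁻ q, ENNReal.ofReal ((c q.2)^2) ∂((sphereUniform 1).prod (P.map κ)) :=
              lintegral_mono hb1
          _ = ∫⁻ n, ENNReal.ofReal ((c n)^2)
                ∂(((sphereUniform 1).prod (P.map κ)).map Prod.snd) :=
              (lintegral_map (f := fun n : ℕ => ENNReal.ofReal ((c n)^2)) measurable_from_nat measurable_snd).symm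
          _ = ∫⁻ n, ENNReal.ofReal ((c n)^2) ∂(P.map κ) := by
              rw [Measure.map_snd_prod, measure_univ, one_smul]
          _ = ∑' n, ENNReal.ofReal ((c n)^2) * (P.map κ) {n} := lintegral_countable' _
          _ = ∑' n, ENNReal.ofReal (2 * b n) := by
              refine tsum_congr fun n => ?_
              rw [hκs n, ← ENNReal.ofReal_mul (sq_nonneg _), hcn2 n]
          _ = ENNReal.ofReal (∑' n, 2 * b n) :=
              (ENNReal.ofReal_tsum_of_nonneg (fun n => by linarith [hb n])
                (hbsum.mul_left 2)).symm
          _ < ⊤ := ENNReal.ofReal_lt_top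
      exact hfin
    calc ∫ t, Z x₁ t * Z x₂ t ∂P
        = ∫ t, (ε t)^2 * K (w t, κ t) ∂P :=
          integral_congr_ae (Filter.Eventually.of_forall hZZ)
      _ = ∫ z : ℝ × ((Sph 1) × ℕ), z.1^2 * K z.2 ∂(P.map fun t => (ε t, w t, κ t)) :=
          (integral_map htup.aemeasurable hFm.aestronglyMeasurable).symm
      _ = ∫ z : ℝ × ((Sph 1) × ℕ), z.1^2 * K z.2
            ∂((P.map ε).prod ((P.map w).prod (P.map κ))) := by rw [hindep]
      _ = (∫ r : ℝ, r^2 ∂(P.map ε)) * ∫ q, K q ∂((P.map w).prod (P.map κ)) :=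
          integral_prod_mul (fun r : ℝ => r^2) K
      _ = ∫ q, K q ∂((sphereUniform 1).prod (P.map κ)) := by
          have hvar : ∫ r : ℝ, r^2 ∂(P.map ε) = 1 := by
            have : ∫ r : ℝ, r^2 ∂(P.map ε) = ∫ t, (ε t)^2 ∂P :=
              integral_map hεm.aemeasurable
                ((measurable_id.pow_const 2).aestronglyMeasurable)
            rw [this]
            exact hεvar
          rw [hvar, one_mul, hwlaw]
      _ = ∫ n, (∫ v, K (v, n) ∂(sphereUniform 1)) ∂(P.map κ) :=
          integral_prod_symm K hKint
      _ = ∑' n, ((P.map κ) {n}).toReal • ∫ v, K (v, n) ∂(sphereUniform 1) :=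
          integral_countable' (hKint.integral_prod_right)
      _ = ∑' n : ℕ, b n * Real.cos ((n : ℝ) * Real.arccos (dotS x₁ x₂)) := by
          refine tsum_congr fun n => ?_
          rw [hκs n, ENNReal.toReal_ofReal (ha n), smul_eq_mul]
          by_cases h : a n = 0
          · have hbn := hb0' n h
            simp [hK, hc, h, hbn]
          · have hcn : (c n)^2 = 2 * b n / a n := by
              rw [hc]
              simp only [if_neg h]
              exact sq_sqrt (div_nonneg (by linarith [hb n]) (ha n))
            rcases Nat.eq_zero_or_pos n with hn0 | hnpos
            · subst hn0
              have : (c 0)^2 = 0 := by rw [hcn, hb0]; ring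
              simp [hK, this, hb0]
            · have hint : ∫ v, K (v, n) ∂(sphereUniform 1)
                  = (c n)^2 * ((1/2) * Real.cos ((n : ℝ) * Real.arccos (dotS x₁ x₂))) := by
                rw [hK]
                rw [integral_const_mul ((c n)^2) (fun v : Sph 1 =>
                  Real.cos ((n : ℝ) * Real.arccos (dotS v x₁)) *
                    Real.cos ((n : ℝ) * Real.arccos (dotS v x₂)))]
                rw [sphere_cos_int n (Nat.pos_iff_ne_zero.mp hnpos) x₁ x₂]
              rw [hint, hcn]
              field_simp
end
end

section
/- Let d ≥ 2 and λ = (d−1)/2. Let (α_k)_{k∈ℕ} be a sequence of reals with ∑_{k=0}^∞ |α_k| < ∞, and define K : [0,π] → ℝ by K(θ) = ∑_{k=0}^∞ α_k (cos θ)^k. Then for every n ∈ ℕ, the Schoenberg coefficient b_{n,d} of K satisfies b_{n,d} = ∑_{ℓ=0}^∞ α_{n+2ℓ} · ((n+2ℓ)! / 2^{n+2ℓ}) · ((λ+n)/ℓ!) · (Γ(λ)/Γ(λ+n+ℓ+1)), the series on the right being absolutely convergent. -/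
open MeasureTheory Real

noncomputable section

/-- The squared weighted L2-norm of the Gegenbauer polynomial of degree n for dimension d. -/
def GegenNormSq (d n : ℕ) : ℝ :=
  ∫ θ in (0 : ℝ)..π, Gegen (((d : ℝ) - 1) / 2) n (Real.cos θ) ^ 2 * Real.sin θ ^ (d - 1)

/-- The n-th Schoenberg coefficient of an isotropic covariance K on the d-sphere. -/
def SchoenbergCoeff (d : ℕ) (K : ℝ → ℝ) (n : ℕ) : ℝ :=
  (GegenNormSq d n)⁻¹ *
    ∫ θ in (0 : ℝ)..π, Gegen (((d : ℝ) - 1) / 2) n (Real.cos θ) * Real.sin θ ^ (d - 1) * K θ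


namespace SchAux

/-- ascending factorial -/
def asc (x : ℝ) : ℕ → ℝ
  | 0 => 1
  | k + 1 => asc x k * (x + k)

lemma asc_zero (x : ℝ) : asc x 0 = 1 := rfl
lemma asc_succ (x : ℝ) (k : ℕ) : asc x (k + 1) = asc x k * (x + k) := rfl

lemma asc_pos {x : ℝ} (hx : 0 < x) : ∀ k, 0 < asc x k
  | 0 => one_pos
  | k + 1 => mul_pos (asc_pos hx k) (by positivity)

lemma asc_ne {x : ℝ} (hx : 0 < x) (k : ℕ) : asc x k ≠ 0 := (asc_pos hx k).ne'

lemma asc_shift (x : ℝ) : ∀ k, asc x (k + 1) = x * asc (x + 1) k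
  | 0 => by simp [asc_succ, asc_zero]
  | k + 1 => by
      rw [asc_succ, asc_shift x k, asc_succ]
      push_cast
      ring

lemma Gamma_ratio {x : ℝ} (hx : 0 < x) (k : ℕ) :
    Real.Gamma (x + k) = Real.Gamma x * asc x k := by
  induction k with
  | zero => simp [asc_zero]
  | succ k ih =>
      have h1 : x + (k + 1 : ℕ) = (x + k) + 1 := by push_cast; ring
      rw [h1, Real.Gamma_add_one (by positivity), ih, asc_succ]
      ring

lemma Gegen_zero (lam r : ℝ) : Gegen lam 0 r = 1 := rfl
lemma Gegen_one' (lam r : ℝ) : Gegen lam 1 r = 2 * lam * r := rfl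
lemma Gegen_two (lam r : ℝ) (n : ℕ) : Gegen lam (n + 2) r =
    2 * ((n : ℝ) + 2 + lam - 1) / ((n : ℝ) + 2) * r * Gegen lam (n + 1) r
      - ((n : ℝ) + 2 + 2 * lam - 2) / ((n : ℝ) + 2) * Gegen lam n r := rfl

lemma Gegen_cont (lam : ℝ) : ∀ n, Continuous fun r => Gegen lam n r := by
  intro n
  induction n using Nat.twoStepInduction with
  | zero => simpa [Gegen_zero] using continuous_const
  | one => show Continuous fun r => 2 * lam * r; exact continuous_const.mul continuous_id
  | more n ih0 ih1 =>
      simp only [Gegen_two]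
      exact ((continuous_const.mul continuous_id).mul ih1).sub (continuous_const.mul ih0)

lemma Gegen_neg (lam : ℝ) : ∀ n r, Gegen lam n (-r) = (-1) ^ n * Gegen lam n r := by
  intro n
  induction n using Nat.twoStepInduction with
  | zero => intro r; simp [Gegen_zero]
  | one => intro r; simp [Gegen_one']
  | more n ih0 ih1 =>
      intro r
      simp only [Gegen_two, ih0 r, ih1 r]
      ring

def lamd (d : ℕ) : ℝ := ((d : ℝ) - 1) / 2

lemma lamd_pos {d : ℕ} (hd : 2 ≤ d) : 0 < lamd d := by
  have : (2 : ℝ) ≤ (d : ℝ) := by exact_mod_cast hd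
  unfold lamd; linarith

/-- the moment integrals -/
def JJ (d n m : ℕ) : ℝ :=
  ∫ θ in (0:ℝ)..π, Gegen (lamd d) n (Real.cos θ) * Real.cos θ ^ m * Real.sin θ ^ (d - 1)

def BB (d m : ℕ) : ℝ := ∫ θ in (0:ℝ)..π, Real.cos θ ^ m * Real.sin θ ^ (d - 1)

lemma contJ (d n m : ℕ) :
    Continuous fun θ => Gegen (lamd d) n (Real.cos θ) * Real.cos θ ^ m * Real.sin θ ^ (d - 1) :=
  (((Gegen_cont (lamd d) n).comp Real.continuous_cos).mul (Real.continuous_cos.pow m)).mul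
    (Real.continuous_sin.pow (d - 1))

lemma intJ (d n m : ℕ) : IntervalIntegrable
    (fun θ => Gegen (lamd d) n (Real.cos θ) * Real.cos θ ^ m * Real.sin θ ^ (d - 1))
    volume 0 π := (contJ d n m).intervalIntegrable 0 π

lemma JJ_zero (d m : ℕ) : JJ d 0 m = BB d m := by
  unfold JJ BB; simp [Gegen_zero]

lemma JJ_one (d m : ℕ) : JJ d 1 m = 2 * lamd d * BB d (m + 1) := by
  unfold JJ BB
  rw [← intervalIntegral.integral_const_mul]
  congr 1; ext θ
  simp only [Gegen_one']
  ring

lemma JJ_rec (d n m : ℕ) : JJ d (n + 2) m =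
    2 * ((n : ℝ) + 2 + lamd d - 1) / ((n : ℝ) + 2) * JJ d (n + 1) (m + 1)
      - ((n : ℝ) + 2 + 2 * lamd d - 2) / ((n : ℝ) + 2) * JJ d n m := by
  unfold JJ
  rw [← intervalIntegral.integral_const_mul, ← intervalIntegral.integral_const_mul,
    ← intervalIntegral.integral_sub (((intJ d (n+1) (m+1)).const_mul _))
      ((intJ d n m).const_mul _)]
  congr 1; ext θ
  simp only [Gegen_two]
  ring

lemma JJ_odd {d n m : ℕ} (h : (n + m) % 2 = 1) : JJ d n m = 0 := by
  have key : JJ d n m = - JJ d n m := by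
    have h1 : (∫ θ in (0:ℝ)..π, Gegen (lamd d) n (Real.cos (π - θ)) *
        Real.cos (π - θ) ^ m * Real.sin (π - θ) ^ (d - 1)) = JJ d n m := by
      rw [intervalIntegral.integral_comp_sub_left
        (fun θ => Gegen (lamd d) n (Real.cos θ) * Real.cos θ ^ m * Real.sin θ ^ (d - 1)) π]
      norm_num [JJ]
    have h2 : (∫ θ in (0:ℝ)..π, Gegen (lamd d) n (Real.cos (π - θ)) *
        Real.cos (π - θ) ^ m * Real.sin (π - θ) ^ (d - 1))
        = ∫ θ in (0:ℝ)..π, -(Gegen (lamd d) n (Real.cos θ) * Real.cos θ ^ m *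
            Real.sin θ ^ (d - 1)) := by
      apply intervalIntegral.integral_congr
      intro θ _
      simp only []
      rw [Real.cos_pi_sub, Real.sin_pi_sub, Gegen_neg]
      have hm : (-Real.cos θ) ^ m = (-1) ^ m * Real.cos θ ^ m := by
        rw [neg_pow]
      rw [hm]
      have hnm : ((-1:ℝ)) ^ n * ((-1:ℝ)) ^ m = -1 := by
        rw [← pow_add]
        rcases Nat.odd_iff.2 h with ⟨t, ht⟩
        rw [ht, pow_succ, pow_mul]
        norm_num
      calc (-1:ℝ) ^ n * Gegen (lamd d) n (Real.cos θ) * ((-1:ℝ) ^ m * Real.cos θ ^ m) *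
            Real.sin θ ^ (d - 1)
          = ((-1:ℝ) ^ n * (-1:ℝ) ^ m) * (Gegen (lamd d) n (Real.cos θ) * Real.cos θ ^ m *
              Real.sin θ ^ (d - 1)) := by ring
        _ = _ := by rw [hnm]; ring
    rw [h2, intervalIntegral.integral_neg] at h1
    have h3 : JJ d n m = ∫ θ in (0:ℝ)..π, Gegen (lamd d) n (Real.cos θ) * Real.cos θ ^ m *
        Real.sin θ ^ (d - 1) := rfl
    linarith [h1, h3]
  linarith

lemma BB_rec {d : ℕ} (hd : 2 ≤ d) (m : ℕ) :
    ((m : ℝ) + 1 + d) * BB d (m + 2) = ((m : ℝ) + 1) * BB d m := by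
  obtain ⟨e, rfl⟩ : ∃ e, d = e + 2 := ⟨d - 2, by omega⟩
  have hderiv : ∀ θ ∈ Set.uIcc (0:ℝ) π, HasDerivAt
      (fun θ => Real.cos θ ^ (m + 1) * Real.sin θ ^ (e + 2))
      ((((m:ℝ)+1) * Real.cos θ ^ m * (-Real.sin θ)) * Real.sin θ ^ (e + 2)
        + Real.cos θ ^ (m+1) * (((e:ℝ)+2) * Real.sin θ ^ (e+1) * Real.cos θ)) θ := by
    intro θ _
    have h1 := ((Real.hasDerivAt_cos θ).pow (m+1)).mul ((Real.hasDerivAt_sin θ).pow (e+2))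
    simp at h1 ⊢
    exact h1
  have hint : IntervalIntegrable (fun θ =>
      (((m:ℝ)+1) * Real.cos θ ^ m * (-Real.sin θ)) * Real.sin θ ^ (e + 2)
        + Real.cos θ ^ (m+1) * (((e:ℝ)+2) * Real.sin θ ^ (e+1) * Real.cos θ)) volume 0 π := by
    apply Continuous.intervalIntegrable; fun_prop
  have h0 : (∫ θ in (0:ℝ)..π,
      (((m:ℝ)+1) * Real.cos θ ^ m * (-Real.sin θ)) * Real.sin θ ^ (e + 2)
        + Real.cos θ ^ (m+1) * (((e:ℝ)+2) * Real.sin θ ^ (e+1) * Real.cos θ)) = 0 := by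
    rw [intervalIntegral.integral_eq_sub_of_hasDerivAt hderiv hint]
    simp [Real.sin_pi]
  -- rewrite the integrand as a combination of BB integrands
  have hptw : ∀ θ : ℝ,
      (((m:ℝ)+1) * Real.cos θ ^ m * (-Real.sin θ)) * Real.sin θ ^ (e + 2)
        + Real.cos θ ^ (m+1) * (((e:ℝ)+2) * Real.sin θ ^ (e+1) * Real.cos θ)
      = ((m:ℝ)+1+((e:ℝ)+2)) * (Real.cos θ ^ (m+2) * Real.sin θ ^ (e+1))
        - ((m:ℝ)+1) * (Real.cos θ ^ m * Real.sin θ ^ (e+1)) := by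
    intro θ
    have hs : Real.sin θ ^ 2 = 1 - Real.cos θ ^ 2 := Real.sin_sq θ
    calc _ = -(((m:ℝ)+1) * Real.cos θ ^ m * Real.sin θ ^ (e+1) * Real.sin θ ^ 2)
            + ((e:ℝ)+2) * Real.cos θ ^ (m+2) * Real.sin θ ^ (e+1) := by ring
      _ = _ := by rw [hs]; ring
  rw [intervalIntegral.integral_congr (fun θ _ => hptw θ)] at h0
  have hsplit : (∫ θ in (0:ℝ)..π,
      ((m:ℝ)+1+((e:ℝ)+2)) * (Real.cos θ ^ (m+2) * Real.sin θ ^ (e+1))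
        - ((m:ℝ)+1) * (Real.cos θ ^ m * Real.sin θ ^ (e+1)))
      = ((m:ℝ)+1+((e:ℝ)+2)) * BB (e+2) (m+2) - ((m:ℝ)+1) * BB (e+2) m := by
    unfold BB
    rw [intervalIntegral.integral_sub, intervalIntegral.integral_const_mul,
      intervalIntegral.integral_const_mul]
    · norm_num
    · apply IntervalIntegrable.const_mul; apply Continuous.intervalIntegrable; fun_prop
    · apply IntervalIntegrable.const_mul; apply Continuous.intervalIntegrable; fun_prop
  rw [hsplit] at h0
  have : ((e:ℝ) + 2 : ℝ) = ((e + 2 : ℕ) : ℝ) := by push_cast; ring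
  have goal : ((m:ℝ)+1+((e:ℝ)+2)) * BB (e+2) (m+2) = ((m:ℝ)+1) * BB (e+2) m := by linarith
  convert goal using 2
  push_cast; ring

lemma lamd_def (d : ℕ) : lamd d = ((d:ℝ)-1)/2 := rfl

def FF (d n ℓ : ℕ) : ℝ :=
  BB d 0 * asc (2 * lamd d) n * (Nat.factorial (n + 2 * ℓ) : ℝ) /
    ((Nat.factorial n : ℝ) * (Nat.factorial ℓ : ℝ) * 2 ^ (n + 2 * ℓ) *
      asc (lamd d + 1) (n + ℓ))

lemma cast_d {d : ℕ} (hd : 2 ≤ d) : (d : ℝ) = 2 * lamd d + 1 := by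
  rw [lamd_def]; field_simp; ring

lemma fact_ne (k : ℕ) : (Nat.factorial k : ℝ) ≠ 0 := by
  exact_mod_cast (Nat.factorial_pos k).ne'

lemma BB_even {d : ℕ} (hd : 2 ≤ d) : ∀ ℓ, BB d (2 * ℓ) = FF d 0 ℓ := by
  have hL : 0 < lamd d := lamd_pos hd
  intro ℓ
  induction ℓ with
  | zero => norm_num [FF, asc_zero]
  | succ ℓ ih =>
      have hrec := BB_rec hd (2 * ℓ)
      have hne : (2*(ℓ:ℝ) + 1 + (d:ℝ)) ≠ 0 := by
        rw [cast_d hd]; nlinarith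
      have e1 : 2 * (ℓ+1) = 2*ℓ + 2 := by omega
      rw [e1]
      have hBB : BB d (2*ℓ+2) = (2*(ℓ:ℝ)+1) * BB d (2*ℓ) / (2*(ℓ:ℝ)+1+(d:ℝ)) := by
        rw [eq_div_iff hne]
        push_cast at hrec ⊢
        linarith [hrec]
      rw [hBB, ih]
      have ef : (Nat.factorial (2*(ℓ+1)) : ℝ)
          = (2*(ℓ:ℝ)+2) * (2*(ℓ:ℝ)+1) * (Nat.factorial (2*ℓ) : ℝ) := by
        rw [show 2*(ℓ+1) = 2*ℓ+1+1 from by omega, Nat.factorial_succ, Nat.factorial_succ]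
        push_cast; ring
      have ep : ((2:ℝ))^(2*(ℓ+1)) = 4 * 2^(2*ℓ) := by
        rw [show 2*(ℓ+1) = 2*ℓ+1+1 from by omega, pow_succ, pow_succ]; ring
      simp only [FF, Nat.zero_add, Nat.factorial_zero, asc_zero, Nat.factorial_succ, asc_succ,
        cast_d hd, ef, ep]
      have h1 := asc_ne (by positivity : (0:ℝ) < lamd d + 1) ℓ
      have h2 := fact_ne ℓ
      have h3 : (Nat.factorial (2*ℓ) : ℝ) ≠ 0 := fact_ne _
      have h4 : asc (lamd d + 1) ℓ * (lamd d + 1 + (ℓ:ℝ)) ≠ 0 := by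
        apply mul_ne_zero h1; positivity
      have h5 : (0:ℝ) < 2*(ℓ:ℝ)+1+(2*lamd d+1) := by positivity
      rw [cast_d hd] at hne
      field_simp
      push_cast
      ring

lemma FF_rec {d : ℕ} (hd : 2 ≤ d) (n ℓ : ℕ) :
    2 * ((n:ℝ) + 2 + lamd d - 1) / ((n:ℝ) + 2) * FF d (n+1) (ℓ+1)
      - ((n:ℝ) + 2 + 2 * lamd d - 2) / ((n:ℝ) + 2) * FF d n (ℓ+1) = FF d (n+2) ℓ := by
  have hL := lamd_pos hd
  set L := lamd d with hLdef
  have i1 : (n+1) + 2*(ℓ+1) = (n + 2*ℓ + 2) + 1 := by omega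
  have i2 : n + 2*(ℓ+1) = n + 2*ℓ + 2 := by omega
  have i3 : (n+2) + 2*ℓ = n + 2*ℓ + 2 := by omega
  have i4 : (n+1) + (ℓ+1) = (n+ℓ) + 1 + 1 := by omega
  have i5 : n + (ℓ+1) = (n+ℓ) + 1 := by omega
  have i6 : (n+2) + ℓ = (n+ℓ) + 1 + 1 := by omega
  have f1 : (Nat.factorial ((n+2*ℓ+2)+1) : ℝ)
      = ((n:ℝ)+2*(ℓ:ℝ)+3) * (Nat.factorial (n+2*ℓ+2) : ℝ) := by
    rw [Nat.factorial_succ]; push_cast; ring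
  have f2 : (Nat.factorial (n+1) : ℝ) = ((n:ℝ)+1) * (Nat.factorial n : ℝ) := by
    rw [Nat.factorial_succ]; push_cast; ring
  have f3 : (Nat.factorial (n+2) : ℝ) = ((n:ℝ)+2)*((n:ℝ)+1)*(Nat.factorial n : ℝ) := by
    rw [show n+2 = n+1+1 from rfl, Nat.factorial_succ, Nat.factorial_succ]; push_cast; ring
  have f4 : (Nat.factorial (ℓ+1) : ℝ) = ((ℓ:ℝ)+1) * (Nat.factorial ℓ : ℝ) := by
    rw [Nat.factorial_succ]; push_cast; ring
  have a1 : asc (2*L) (n+1) = asc (2*L) n * (2*L+(n:ℝ)) := by rw [asc_succ]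
  have a2 : asc (2*L) (n+2) = asc (2*L) n * (2*L+(n:ℝ)) * (2*L+(n:ℝ)+1) := by
    rw [show n+2 = n+1+1 from rfl, asc_succ, asc_succ]; push_cast; ring
  have p1 : asc (L+1) ((n+ℓ)+1) = asc (L+1) (n+ℓ) * (L+1+((n:ℝ)+(ℓ:ℝ))) := by
    rw [asc_succ]; push_cast; ring
  have p2 : asc (L+1) ((n+ℓ)+1+1)
      = asc (L+1) (n+ℓ) * (L+1+((n:ℝ)+(ℓ:ℝ))) * (L+1+((n:ℝ)+(ℓ:ℝ))+1) := by
    rw [asc_succ, p1]; push_cast; ring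
  have q1 : ((2:ℝ))^((n+2*ℓ+2)+1) = 2 * 2^(n+2*ℓ+2) := by rw [pow_succ]; ring
  simp only [FF, ← hLdef, i1, i2, i3, i4, i5, i6, f1, f2, f3, f4, a1, a2, p1, p2, q1]
  have h1 : ((n:ℝ)+2) ≠ 0 := by positivity
  have h2 := fact_ne n
  have h3 := fact_ne ℓ
  have h4 := fact_ne (n+2*ℓ+2)
  have h5 : ((2:ℝ))^(n+2*ℓ+2) ≠ 0 := by positivity
  have h6 := asc_ne (by positivity : (0:ℝ) < L + 1) (n+ℓ)
  have h7 : L+1+((n:ℝ)+(ℓ:ℝ)) ≠ 0 := by positivity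
  have h8 : L+1+((n:ℝ)+(ℓ:ℝ))+1 ≠ 0 := by positivity
  field_simp
  ring

lemma FF_van {d : ℕ} (hd : 2 ≤ d) (n : ℕ) :
    2 * ((n:ℝ) + 2 + lamd d - 1) / ((n:ℝ) + 2) * FF d (n+1) 0
      = ((n:ℝ) + 2 + 2 * lamd d - 2) / ((n:ℝ) + 2) * FF d n 0 := by
  have hL := lamd_pos hd
  set L := lamd d with hLdef
  have f2 : (Nat.factorial (n+1) : ℝ) = ((n:ℝ)+1) * (Nat.factorial n : ℝ) := by
    rw [Nat.factorial_succ]; push_cast; ring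
  have a1 : asc (2*L) (n+1) = asc (2*L) n * (2*L+(n:ℝ)) := by rw [asc_succ]
  have p1 : asc (L+1) (n+1) = asc (L+1) n * (L+1+(n:ℝ)) := by rw [asc_succ]
  have q1 : ((2:ℝ))^(n+1) = 2 * 2^n := by rw [pow_succ]; ring
  simp only [FF, ← hLdef, Nat.mul_zero, Nat.add_zero, f2, a1, p1, q1]
  have h1 : ((n:ℝ)+2) ≠ 0 := by positivity
  have h2 := fact_ne n
  have h5 : ((2:ℝ))^n ≠ 0 := by positivity
  have h6 := asc_ne (by positivity : (0:ℝ) < L + 1) n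
  have h7 : L+1+(n:ℝ) ≠ 0 := by positivity
  field_simp
  ring

lemma JJ_eq_FF {d : ℕ} (hd : 2 ≤ d) : ∀ n ℓ, JJ d n (n + 2*ℓ) = FF d n ℓ := by
  intro n
  induction n using Nat.twoStepInduction with
  | zero =>
      intro ℓ
      rw [show 0 + 2*ℓ = 2*ℓ from by omega] at *
      rw [JJ_zero, BB_even hd]
  | one =>
      intro ℓ
      have hL := lamd_pos hd
      rw [JJ_one, show 1 + 2*ℓ + 1 = 2*(ℓ+1) from by omega, BB_even hd]
      have f1 : (Nat.factorial (2*(ℓ+1)) : ℝ)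
          = (2*(ℓ:ℝ)+2) * (Nat.factorial (1+2*ℓ) : ℝ) := by
        rw [show 2*(ℓ+1) = (1+2*ℓ)+1 from by omega, Nat.factorial_succ]; push_cast; ring
      have f4 : (Nat.factorial (ℓ+1) : ℝ) = ((ℓ:ℝ)+1) * (Nat.factorial ℓ : ℝ) := by
        rw [Nat.factorial_succ]; push_cast; ring
      have q1 : ((2:ℝ))^(2*(ℓ+1)) = 2 * 2^(1+2*ℓ) := by
        rw [show 2*(ℓ+1) = (1+2*ℓ)+1 from by omega, pow_succ]; ring
      have a1 : asc (2*lamd d) 1 = 2 * lamd d := by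
        rw [show asc (2*lamd d) 1 = asc (2*lamd d) 0 * (2*lamd d + (0:ℕ)) from rfl, asc_zero]; push_cast; ring
      have i1 : 0 + (ℓ+1) = 1 + ℓ := by omega
      have i2 : 0 + 2*(ℓ+1) = 2*(ℓ+1) := by omega
      simp only [FF, i1, Nat.zero_add, Nat.factorial_zero, Nat.factorial_one, asc_zero, a1,
        f4, q1]
      rw [f1]
      have h2 := fact_ne ℓ
      have h3 := fact_ne (1+2*ℓ)
      have h5 : ((2:ℝ))^(1+2*ℓ) ≠ 0 := by positivity
      have h6 := asc_ne (by positivity : (0:ℝ) < lamd d + 1) (1+ℓ)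
      field_simp
  | more n ih0 ih1 =>
      intro ℓ
      rw [JJ_rec,
        show n + 2 + 2*ℓ + 1 = (n+1) + 2*(ℓ+1) from by omega,
        show n + 2 + 2*ℓ = n + 2*(ℓ+1) from by omega,
        ih1 (ℓ+1), ih0 (ℓ+1), FF_rec hd]

lemma JJ_vanish {d : ℕ} (hd : 2 ≤ d) : ∀ n k, k < n → (n + k) % 2 = 0 → JJ d n k = 0 := by
  intro n
  induction n using Nat.twoStepInduction with
  | zero => intro k hk _; omega
  | one => intro k hk hp; omega
  | more n ih0 ih1 =>
      intro k hk hp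
      rw [JJ_rec]
      rcases lt_or_eq_of_le (show k ≤ n from by omega) with hlt | rfl
      · rw [ih1 (k+1) (by omega) (by omega), ih0 k hlt (by omega)]
        ring
      · have e1 : JJ d (k+1) (k+1) = FF d (k+1) 0 := by
          have := JJ_eq_FF hd (k+1) 0
          rwa [show (k+1) + 2*0 = k+1 from by omega] at this
        have e0 : JJ d k k = FF d k 0 := by
          have := JJ_eq_FF hd k 0
          rwa [show k + 2*0 = k from by omega] at this
        rw [e1, e0, FF_van hd k]
        ring

lemma Gegen_poly (lam : ℝ) : ∀ n, ∃ p : Polynomial ℝ,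
    (∀ r, Gegen lam n r = p.eval r) ∧ p.natDegree ≤ n ∧
    p.coeff n = 2^n * asc lam n / (Nat.factorial n : ℝ) := by
  intro n
  induction n using Nat.twoStepInduction with
  | zero =>
      refine ⟨1, fun r => by simp [Gegen_zero], by simp, ?_⟩
      simp [asc_zero]
  | one =>
      refine ⟨Polynomial.C (2*lam) * Polynomial.X, fun r => by simp [Gegen_one'], ?_, ?_⟩
      · exact le_trans (Polynomial.natDegree_C_mul_le _ _) Polynomial.natDegree_X_le
      · rw [Polynomial.coeff_C_mul, Polynomial.coeff_X_one]
        rw [show asc lam 1 = asc lam 0 * (lam + (0:ℕ)) from rfl, asc_zero]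
        norm_num
  | more n ih0 ih1 =>
      obtain ⟨p0, hp0e, hp0d, hp0c⟩ := ih0
      obtain ⟨p1, hp1e, hp1d, hp1c⟩ := ih1
      refine ⟨Polynomial.C (2 * ((n : ℝ) + 2 + lam - 1) / ((n : ℝ) + 2)) * (Polynomial.X * p1)
        - Polynomial.C (((n : ℝ) + 2 + 2 * lam - 2) / ((n : ℝ) + 2)) * p0, ?_, ?_, ?_⟩
      · intro r
        simp [Gegen_two, hp1e, hp0e]
        ring
      · refine le_trans (Polynomial.natDegree_sub_le _ _) ?_
        have d1 : (Polynomial.C (2 * ((n : ℝ) + 2 + lam - 1) / ((n : ℝ) + 2)) *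
            (Polynomial.X * p1)).natDegree ≤ n + 2 := by
          refine le_trans (Polynomial.natDegree_C_mul_le _ _) ?_
          refine le_trans (Polynomial.natDegree_mul_le) ?_
          have := Polynomial.natDegree_X_le (R := ℝ)
          omega
        have d2 : (Polynomial.C (((n : ℝ) + 2 + 2 * lam - 2) / ((n : ℝ) + 2)) *
            p0).natDegree ≤ n + 2 := by
          refine le_trans (Polynomial.natDegree_C_mul_le _ _) ?_
          omega
        omega
      · rw [Polynomial.coeff_sub, Polynomial.coeff_C_mul, Polynomial.coeff_C_mul,
          show n + 2 = (n+1)+1 from rfl, Polynomial.coeff_X_mul, hp1c,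
          Polynomial.coeff_eq_zero_of_natDegree_lt (lt_of_le_of_lt hp0d (by omega))]
        have f3 : (Nat.factorial (n+1+1) : ℝ)
            = ((n:ℝ)+2)*((n:ℝ)+1)*(Nat.factorial n : ℝ) := by
          rw [Nat.factorial_succ, Nat.factorial_succ]; push_cast; ring
        have f2 : (Nat.factorial (n+1) : ℝ) = ((n:ℝ)+1) * (Nat.factorial n : ℝ) := by
          rw [Nat.factorial_succ]; push_cast; ring
        have a2 : asc lam (n+1+1) = asc lam (n+1) * (lam+(n:ℝ)+1) := by
          rw [asc_succ]; push_cast; ring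
        rw [f3, f2, a2]
        have h1 : ((n:ℝ)+2) ≠ 0 := by positivity
        have h2 := fact_ne n
        have h4 : ((n:ℝ)+1) ≠ 0 := by positivity
        field_simp
        ring

lemma GegenNormSq_eq {d : ℕ} (hd : 2 ≤ d) (n : ℕ) :
    GegenNormSq d n = (2^n * asc (lamd d) n / (Nat.factorial n : ℝ)) * FF d n 0 := by
  obtain ⟨p, hpe, hpd, hpc⟩ := Gegen_poly (lamd d) n
  have hL : lamd d = ((d : ℝ) - 1) / 2 := rfl
  have step1 : GegenNormSq d n = ∫ θ in (0:ℝ)..π,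
      ∑ i ∈ Finset.range (n+1), p.coeff i *
        (Gegen (lamd d) n (Real.cos θ) * Real.cos θ ^ i * Real.sin θ ^ (d-1)) := by
    unfold GegenNormSq
    apply intervalIntegral.integral_congr
    intro θ _
    simp only []
    rw [← hL, show Gegen (lamd d) n (Real.cos θ) ^ 2
        = p.eval (Real.cos θ) * Gegen (lamd d) n (Real.cos θ) from by rw [← hpe]; ring,
      Polynomial.eval_eq_sum_range' (lt_of_le_of_lt hpd (Nat.lt_succ_self n)),
      Finset.sum_mul, Finset.sum_mul]
    apply Finset.sum_congr rfl
    intro i _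
    ring
  rw [step1, intervalIntegral.integral_finset_sum (fun i _ => (intJ d n i).const_mul _)]
  have step2 : ∀ i ∈ Finset.range (n+1),
      (∫ θ in (0:ℝ)..π, p.coeff i *
        (Gegen (lamd d) n (Real.cos θ) * Real.cos θ ^ i * Real.sin θ ^ (d-1)))
      = p.coeff i * JJ d n i := fun i _ => intervalIntegral.integral_const_mul _ _
  rw [Finset.sum_congr rfl step2, Finset.sum_range_succ]
  have step3 : ∀ i ∈ Finset.range n, p.coeff i * JJ d n i = 0 := by
    intro i hi
    have hi' : i < n := Finset.mem_range.1 hi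
    rcases Nat.mod_two_eq_zero_or_one (n + i) with hp | hp
    · rw [JJ_vanish hd n i hi' hp]; ring
    · rw [JJ_odd hp]; ring
  rw [Finset.sum_eq_zero step3, hpc]
  have := JJ_eq_FF hd n 0
  rw [show n + 2*0 = n from by omega] at this
  rw [this]
  ring

lemma BB0_pos {d : ℕ} (hd : 2 ≤ d) : 0 < BB d 0 := by
  unfold BB
  apply intervalIntegral.intervalIntegral_pos_of_pos_on
  · apply Continuous.intervalIntegrable; fun_prop
  · intro x hx
    have hs : 0 < Real.sin x := Real.sin_pos_of_pos_of_lt_pi hx.1 hx.2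
    positivity
  · exact Real.pi_pos

lemma FF_pos {d : ℕ} (hd : 2 ≤ d) (n ℓ : ℕ) : 0 < FF d n ℓ := by
  have hL := lamd_pos hd
  have h0 := BB0_pos hd
  have h1 := asc_pos (by positivity : (0:ℝ) < 2 * lamd d) n
  have h2 := asc_pos (by positivity : (0:ℝ) < lamd d + 1) (n + ℓ)
  have h3 : (0:ℝ) < (Nat.factorial (n + 2*ℓ) : ℝ) := by exact_mod_cast Nat.factorial_pos _
  have h4 : (0:ℝ) < (Nat.factorial n : ℝ) := by exact_mod_cast Nat.factorial_pos _
  have h5 : (0:ℝ) < (Nat.factorial ℓ : ℝ) := by exact_mod_cast Nat.factorial_pos _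
  unfold FF
  positivity

lemma GegenNormSq_pos {d : ℕ} (hd : 2 ≤ d) (n : ℕ) : 0 < GegenNormSq d n := by
  rw [GegenNormSq_eq hd n]
  have hL := lamd_pos hd
  have h1 := asc_pos hL n
  have h4 : (0:ℝ) < (Nat.factorial n : ℝ) := by exact_mod_cast Nat.factorial_pos _
  have := FF_pos hd n 0
  positivity

lemma Gegen_bound (lam : ℝ) (n : ℕ) :
    ∃ C : ℝ, 0 ≤ C ∧ ∀ x ∈ Set.Icc (-1:ℝ) 1, |Gegen lam n x| ≤ C := by
  obtain ⟨C, hC⟩ := (isCompact_Icc (a := (-1:ℝ)) (b := 1)).exists_bound_of_continuousOn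
    ((Gegen_cont lam n).continuousOn)
  refine ⟨C, le_trans (norm_nonneg (Gegen lam n 0)) (hC 0 (by norm_num)), fun x hx => ?_⟩
  simpa [Real.norm_eq_abs] using hC x hx

lemma key_integral {d : ℕ} (hd : 2 ≤ d) (n : ℕ) (α : ℕ → ℝ)
    (hα : Summable fun k => |α k|) :
    (∫ θ in (0:ℝ)..π, Gegen (lamd d) n (Real.cos θ) * Real.sin θ ^ (d-1) *
      (∑' k : ℕ, α k * Real.cos θ ^ k)) = ∑' k : ℕ, α k * JJ d n k := by
  obtain ⟨C, hC0, hC⟩ := Gegen_bound (lamd d) n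
  set f : ℕ → ℝ → ℝ := fun k θ =>
    Gegen (lamd d) n (Real.cos θ) * Real.sin θ ^ (d-1) * (α k * Real.cos θ ^ k) with hf
  have hptw : ∀ θ : ℝ, Gegen (lamd d) n (Real.cos θ) * Real.sin θ ^ (d-1) *
      (∑' k : ℕ, α k * Real.cos θ ^ k) = ∑' k : ℕ, f k θ := by
    intro θ
    rw [tsum_mul_left]
  have hbound : ∀ k θ, |f k θ| ≤ C * |α k| := by
    intro k θ
    have h1 : |Real.sin θ| ≤ 1 := abs_le.mpr ⟨Real.neg_one_le_sin θ, Real.sin_le_one θ⟩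
    have h2 : |Real.cos θ| ≤ 1 := abs_le.mpr ⟨Real.neg_one_le_cos θ, Real.cos_le_one θ⟩
    have h3 : |Gegen (lamd d) n (Real.cos θ)| ≤ C :=
      hC _ ⟨Real.neg_one_le_cos θ, Real.cos_le_one θ⟩
    have e1 : |f k θ| = |Gegen (lamd d) n (Real.cos θ)| * |Real.sin θ| ^ (d-1) *
        (|α k| * |Real.cos θ| ^ k) := by
      rw [hf]; simp only []
      rw [abs_mul, abs_mul, abs_mul, abs_pow, abs_pow]
    rw [e1]
    calc |Gegen (lamd d) n (Real.cos θ)| * |Real.sin θ| ^ (d-1) * (|α k| * |Real.cos θ| ^ k)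
        ≤ C * 1 ^ (d-1) * (|α k| * 1 ^ k) := by
          gcongr <;> first | exact abs_nonneg _ | skip
      _ = C * |α k| := by simp
  have hmeas : ∀ k : ℕ, AEStronglyMeasurable (f k)
      (volume.restrict (Set.Ioc (0:ℝ) π)) := by
    intro k
    apply Continuous.aestronglyMeasurable
    exact (((Gegen_cont (lamd d) n).comp Real.continuous_cos).mul
      (Real.continuous_sin.pow (d-1))).mul (continuous_const.mul (Real.continuous_cos.pow k))
  have hlint : ∑' k : ℕ, ∫⁻ θ in Set.Ioc (0:ℝ) π, ‖f k θ‖₊ ≠ ⊤ := by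
    have hle : ∀ k : ℕ, (∫⁻ θ in Set.Ioc (0:ℝ) π, ‖f k θ‖₊)
        ≤ ENNReal.ofReal (C * |α k| * π) := by
      intro k
      calc (∫⁻ θ in Set.Ioc (0:ℝ) π, (‖f k θ‖₊ : ENNReal))
          ≤ ∫⁻ _ in Set.Ioc (0:ℝ) π, ENNReal.ofReal (C * |α k|) := by
            apply MeasureTheory.setLIntegral_mono' measurableSet_Ioc
            intro θ _
            rw [← enorm_eq_nnnorm, ← ofReal_norm]
            exact ENNReal.ofReal_le_ofReal (by simpa [Real.norm_eq_abs] using hbound k θ)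
        _ = ENNReal.ofReal (C * |α k|) * volume (Set.Ioc (0:ℝ) π) :=
            MeasureTheory.setLIntegral_const _ _
        _ = ENNReal.ofReal (C * |α k| * π) := by
            rw [Real.volume_Ioc, ← ENNReal.ofReal_mul (by positivity)]
            norm_num
    have hsum : Summable (fun k => C * |α k| * π) := (hα.mul_left C).mul_right π
    have : (∑' k : ℕ, ∫⁻ θ in Set.Ioc (0:ℝ) π, ‖f k θ‖₊)
        ≤ ∑' k : ℕ, ENNReal.ofReal (C * |α k| * π) := ENNReal.tsum_le_tsum hle
    rw [← ENNReal.ofReal_tsum_of_nonneg (fun k => by positivity) hsum] at this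
    exact ne_top_of_le_ne_top ENNReal.ofReal_ne_top this
  have hIoc : (∫ θ in (0:ℝ)..π, Gegen (lamd d) n (Real.cos θ) * Real.sin θ ^ (d-1) *
      (∑' k : ℕ, α k * Real.cos θ ^ k))
      = ∫ θ in Set.Ioc (0:ℝ) π, (∑' k : ℕ, f k θ) := by
    rw [intervalIntegral.integral_of_le Real.pi_pos.le]
    apply MeasureTheory.setIntegral_congr_fun measurableSet_Ioc
    intro θ _
    exact hptw θ
  rw [hIoc, MeasureTheory.integral_tsum hmeas hlint]
  apply tsum_congr
  intro k
  have : (∫ θ in Set.Ioc (0:ℝ) π, f k θ) = ∫ θ in (0:ℝ)..π, f k θ :=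
    (intervalIntegral.integral_of_le Real.pi_pos.le).symm
  rw [this]
  have e2 : ∀ θ : ℝ, f k θ =
      α k * (Gegen (lamd d) n (Real.cos θ) * Real.cos θ ^ k * Real.sin θ ^ (d-1)) := by
    intro θ; rw [hf]; simp only []; ring
  rw [intervalIntegral.integral_congr (fun θ _ => e2 θ), intervalIntegral.integral_const_mul]
  rfl

lemma JJ_off {d n k : ℕ} (hd : 2 ≤ d) (h : ¬ ∃ ℓ, k = n + 2*ℓ) : JJ d n k = 0 := by
  rcases Nat.mod_two_eq_zero_or_one (n+k) with hp | hp
  · have hk : k < n := by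
      by_contra hk'
      push_neg at hk'
      exact h ⟨(k-n)/2, by omega⟩
    exact JJ_vanish hd n k hk hp
  · exact JJ_odd hp

lemma JJ_bound {d : ℕ} (hd : 2 ≤ d) (n : ℕ) :
    ∃ D : ℝ, 0 ≤ D ∧ ∀ m, |JJ d n m| ≤ D := by
  obtain ⟨C, hC0, hC⟩ := Gegen_bound (lamd d) n
  refine ⟨C * BB d 0, by nlinarith [BB0_pos hd], fun m => ?_⟩
  unfold JJ
  calc |∫ θ in (0:ℝ)..π, Gegen (lamd d) n (Real.cos θ) * Real.cos θ ^ m *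
        Real.sin θ ^ (d-1)|
      ≤ ∫ θ in (0:ℝ)..π, |Gegen (lamd d) n (Real.cos θ) * Real.cos θ ^ m *
        Real.sin θ ^ (d-1)| :=
        intervalIntegral.abs_integral_le_integral_abs Real.pi_pos.le
    _ ≤ ∫ θ in (0:ℝ)..π, C * (Real.cos θ ^ 0 * Real.sin θ ^ (d-1)) := by
        apply intervalIntegral.integral_mono_on Real.pi_pos.le
        · exact ((contJ d n m).abs).intervalIntegrable 0 π
        · apply Continuous.intervalIntegrable; fun_prop
        · intro θ hθ
          have hsin : 0 ≤ Real.sin θ := Real.sin_nonneg_of_nonneg_of_le_pi hθ.1 hθ.2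
          have h2 : |Real.cos θ| ≤ 1 := abs_le.mpr ⟨Real.neg_one_le_cos θ, Real.cos_le_one θ⟩
          have h3 : |Gegen (lamd d) n (Real.cos θ)| ≤ C :=
            hC _ ⟨Real.neg_one_le_cos θ, Real.cos_le_one θ⟩
          rw [abs_mul, abs_mul, abs_pow, abs_pow, abs_of_nonneg hsin]
          calc |Gegen (lamd d) n (Real.cos θ)| * |Real.cos θ| ^ m * Real.sin θ ^ (d-1)
              ≤ C * 1 ^ m * Real.sin θ ^ (d-1) := by
                gcongr <;> first | exact abs_nonneg _ | skip
            _ = C * (Real.cos θ ^ 0 * Real.sin θ ^ (d-1)) := by simp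
    _ = C * BB d 0 := by rw [intervalIntegral.integral_const_mul]; rfl

lemma coeff_id {d : ℕ} (hd : 2 ≤ d) (n ℓ : ℕ) :
    FF d n ℓ / GegenNormSq d n
      = (Nat.factorial (n + 2*ℓ) : ℝ) / 2^(n+2*ℓ) * ((lamd d + n) / (Nat.factorial ℓ : ℝ)) *
        (Real.Gamma (lamd d) / Real.Gamma (lamd d + n + ℓ + 1)) := by
  have hL := lamd_pos hd
  have hG : Real.Gamma (lamd d + (n:ℝ) + (ℓ:ℝ) + 1)
      = Real.Gamma (lamd d) * asc (lamd d) (n+ℓ+1) := by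
    have h := Gamma_ratio hL (n+ℓ+1)
    rw [show lamd d + ((n+ℓ+1 : ℕ) : ℝ) = lamd d + (n:ℝ) + (ℓ:ℝ) + 1 from by push_cast; ring]
      at h
    exact h
  rw [GegenNormSq_eq hd n, hG]
  have hGne : Real.Gamma (lamd d) ≠ 0 := (Real.Gamma_pos_of_pos hL).ne'
  have s1 : asc (lamd d) (n+ℓ+1) = lamd d * asc (lamd d + 1) (n+ℓ) := asc_shift _ _
  have s2 : lamd d * asc (lamd d + 1) n = asc (lamd d) n * (lamd d + (n:ℝ)) := by
    rw [← asc_shift, asc_succ]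
  rw [s1]
  have h1 := fact_ne n
  have h2 := fact_ne ℓ
  have h3 := fact_ne (n + 2*ℓ)
  have h6 := asc_ne (by positivity : (0:ℝ) < lamd d + 1) (n+ℓ)
  have h7 := asc_ne (by positivity : (0:ℝ) < lamd d + 1) n
  have h8 : lamd d + (n:ℝ) ≠ 0 := by positivity
  have h9 : lamd d ≠ 0 := hL.ne'
  have h10 := (BB0_pos hd).ne'
  have hvne := asc_ne hL n
  have ha2 := asc_ne (by positivity : (0:ℝ) < 2 * lamd d) n
  have stepC : Real.Gamma (lamd d) / (Real.Gamma (lamd d) * (lamd d * asc (lamd d + 1) (n+ℓ)))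
      = 1 / (lamd d * asc (lamd d + 1) (n+ℓ)) := by
    rw [div_eq_div_iff (by exact mul_ne_zero hGne (mul_ne_zero h9 h6))
      (mul_ne_zero h9 h6)]
    ring
  rw [stepC]
  have stepB : FF d n ℓ / ((2^n * asc (lamd d) n / (Nat.factorial n : ℝ)) * FF d n 0)
      = (Nat.factorial (n + 2*ℓ) : ℝ) * asc (lamd d + 1) n /
          (2^(n+2*ℓ) * (Nat.factorial ℓ : ℝ) * asc (lamd d) n * asc (lamd d + 1) (n+ℓ)) := by
    simp only [FF, Nat.mul_zero, Nat.add_zero]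
    rw [pow_add (2:ℝ) n (2*ℓ)]
    have h5 : ((2:ℝ))^n ≠ 0 := by positivity
    have hp2 : ((2:ℝ))^(2*ℓ) ≠ 0 := by positivity
    field_simp
    ring
  rw [stepB, pow_add (2:ℝ) n (2*ℓ)]
  have h5 : ((2:ℝ))^n ≠ 0 := by positivity
  have hp2 : ((2:ℝ))^(2*ℓ) ≠ 0 := by positivity
  rw [div_mul_div_comm, div_mul_div_comm,
    div_eq_div_iff
      (mul_ne_zero (mul_ne_zero (mul_ne_zero (mul_ne_zero h5 hp2) h2) hvne) h6)
      (mul_ne_zero (mul_ne_zero (mul_ne_zero h5 hp2) h2) (mul_ne_zero h9 h6))]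
  linear_combination ((Nat.factorial (n + 2*ℓ) : ℝ) * 2^n * 2^(2*ℓ) *
    (Nat.factorial ℓ : ℝ) * asc (lamd d + 1) (n+ℓ)) * s2

end SchAux

/-- Generic formula for the Schoenberg coefficients of a covariance whose isotropic part is
an absolutely convergent power series in the cosine of the geodesic distance. -/
theorem schoenberg_coeff_of_power_series
    (d : ℕ) (hd : 2 ≤ d) (α : ℕ → ℝ) (hα : Summable fun k => |α k|) (n : ℕ) :
    Summable (fun ℓ : ℕ =>
      |α (n + 2 * ℓ) * ((Nat.factorial (n + 2 * ℓ) : ℝ) / 2 ^ (n + 2 * ℓ)) *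
        (((((d : ℝ) - 1) / 2) + n) / (Nat.factorial ℓ : ℝ)) *
        (Real.Gamma (((d : ℝ) - 1) / 2) /
          Real.Gamma ((((d : ℝ) - 1) / 2) + n + ℓ + 1))|)
    ∧ SchoenbergCoeff d (fun θ => ∑' k : ℕ, α k * Real.cos θ ^ k) n
      = ∑' ℓ : ℕ,
          α (n + 2 * ℓ) * ((Nat.factorial (n + 2 * ℓ) : ℝ) / 2 ^ (n + 2 * ℓ)) *
            (((((d : ℝ) - 1) / 2) + n) / (Nat.factorial ℓ : ℝ)) *
            (Real.Gamma (((d : ℝ) - 1) / 2) /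
              Real.Gamma ((((d : ℝ) - 1) / 2) + n + ℓ + 1)) := by
  classical
  have hlam : SchAux.lamd d = ((d : ℝ) - 1) / 2 := rfl
  simp only [← hlam]
  obtain ⟨D, hD0, hD⟩ := SchAux.JJ_bound hd n
  have hNpos := SchAux.GegenNormSq_pos hd n
  have inj : Function.Injective (fun ℓ : ℕ => n + 2 * ℓ) := by
    intro a b h
    simp only [] at h
    omega
  have hterm : ∀ ℓ : ℕ,
      α (n + 2 * ℓ) * ((Nat.factorial (n + 2 * ℓ) : ℝ) / 2 ^ (n + 2 * ℓ)) *
          ((SchAux.lamd d + n) / (Nat.factorial ℓ : ℝ)) *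
          (Real.Gamma (SchAux.lamd d) / Real.Gamma (SchAux.lamd d + n + ℓ + 1))
        = α (n + 2 * ℓ) * (SchAux.FF d n ℓ / GegenNormSq d n) := by
    intro ℓ
    rw [SchAux.coeff_id hd n ℓ]
    ring
  have habs : ∀ ℓ : ℕ,
      |α (n + 2 * ℓ) * ((Nat.factorial (n + 2 * ℓ) : ℝ) / 2 ^ (n + 2 * ℓ)) *
          ((SchAux.lamd d + n) / (Nat.factorial ℓ : ℝ)) *
          (Real.Gamma (SchAux.lamd d) / Real.Gamma (SchAux.lamd d + n + ℓ + 1))|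
        ≤ |α (n + 2 * ℓ)| * (D / GegenNormSq d n) := by
    intro ℓ
    rw [hterm ℓ, abs_mul]
    have hX : |SchAux.FF d n ℓ / GegenNormSq d n| ≤ D / GegenNormSq d n := by
      rw [abs_div, abs_of_pos hNpos, ← SchAux.JJ_eq_FF hd n ℓ]
      gcongr
      exact hD _
    exact mul_le_mul_of_nonneg_left hX (abs_nonneg _)
  have hsummable : Summable (fun ℓ : ℕ => |α (n + 2 * ℓ)| * (D / GegenNormSq d n)) :=
    (hα.comp_injective inj).mul_right _
  constructor
  · exact Summable.of_nonneg_of_le (fun ℓ => abs_nonneg _) habs hsummable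
  · have hSD : SchoenbergCoeff d (fun θ => ∑' k : ℕ, α k * Real.cos θ ^ k) n
        = (GegenNormSq d n)⁻¹ * ∑' k : ℕ, α k * SchAux.JJ d n k := by
      rw [SchoenbergCoeff]
      congr 1
      exact SchAux.key_integral hd n α hα
    have hre : (∑' k : ℕ, α k * SchAux.JJ d n k)
        = ∑' ℓ : ℕ, α (n + 2 * ℓ) * SchAux.JJ d n (n + 2 * ℓ) := by
      refine (inj.tsum_eq ?_).symm
      intro k hk
      by_contra hnk
      apply hk
      have : ¬ ∃ ℓ, k = n + 2 * ℓ := by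
        intro ⟨ℓ, hℓ⟩
        exact hnk ⟨ℓ, hℓ.symm⟩
      show α k * SchAux.JJ d n k = 0
      rw [SchAux.JJ_off hd this]
      simp
    rw [hSD, hre, ← tsum_mul_left]
    apply tsum_congr
    intro ℓ
    rw [hterm ℓ, SchAux.JJ_eq_FF hd n ℓ]
    ring
end
end

section
/- Let d ≥ 2 and λ = (d−1)/2, and let K_C : [0,π] → ℝ be the Chentsov covariance K_C(θ) = 1 − 2θ/π. Then its Schoenberg coefficients satisfy b_{2n,d} = 0 for all n ∈ ℕ, and b_{2n+1,d} = ((λ+2n+1) Γ(λ) Γ(λ+1) / π²) · Γ(n+1/2)² / Γ(λ+n+3/2)² for all n ∈ ℕ. -/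
open MeasureTheory Real

noncomputable section

namespace ChentsovAux

lemma gegen_zero (lam x : ℝ) : Gegen lam 0 x = 1 := rfl
lemma gegen_one (lam x : ℝ) : Gegen lam 1 x = 2 * lam * x := rfl
lemma gegen_succ_succ (lam : ℝ) (n : ℕ) (x : ℝ) :
    Gegen lam (n + 2) x =
      2 * ((n : ℝ) + 2 + lam - 1) / ((n : ℝ) + 2) * x * Gegen lam (n + 1) x
        - ((n : ℝ) + 2 + 2 * lam - 2) / ((n : ℝ) + 2) * Gegen lam n x := rfl

lemma continuous_gegen (lam : ℝ) (n : ℕ) : Continuous (Gegen lam n) := by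
  induction n using Nat.twoStepInduction with
  | zero => simp only [show Gegen lam 0 = fun _ => (1:ℝ) from rfl]; fun_prop
  | one => simp only [show Gegen lam 1 = fun r => 2*lam*r from rfl]; fun_prop
  | more n ih0 ih1 =>
    simp only [show Gegen lam (n+2) = fun r =>
      2 * ((n : ℝ) + 2 + lam - 1) / ((n : ℝ) + 2) * r * Gegen lam (n + 1) r
        - ((n : ℝ) + 2 + 2 * lam - 2) / ((n : ℝ) + 2) * Gegen lam n r from rfl]
    fun_prop

/-- division-free recurrence -/
lemma gegen_rec (lam : ℝ) (n : ℕ) (x : ℝ) :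
    ((n : ℝ) + 2) * Gegen lam (n + 2) x =
      2 * ((n : ℝ) + 1 + lam) * x * Gegen lam (n + 1) x
        - ((n : ℝ) + 2 * lam) * Gegen lam n x := by
  have h : ((n : ℝ) + 2) ≠ 0 := by positivity
  rw [gegen_succ_succ]
  field_simp
  ring

lemma gegen_neg (lam : ℝ) (n : ℕ) (x : ℝ) :
    Gegen lam n (-x) = (-1) ^ n * Gegen lam n x := by
  induction n using Nat.twoStepInduction with
  | zero => simp [gegen_zero]
  | one => simp [gegen_one]
  | more n ih0 ih1 =>
    rw [gegen_succ_succ, gegen_succ_succ, ih0, ih1]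
    ring

/-- relation (B): (m+2) C_{m+2}^λ = 2λ (x C_{m+1}^{λ+1} − C_m^{λ+1}) -/
lemma gegen_B (lam : ℝ) (m : ℕ) (x : ℝ) :
    ((m : ℝ) + 2) * Gegen lam (m + 2) x =
      2 * lam * (x * Gegen (lam + 1) (m + 1) x - Gegen (lam + 1) m x) := by
  induction m using Nat.twoStepInduction with
  | zero =>
    have e2 : Gegen lam 2 x = _ := gegen_succ_succ lam 0 x
    simp only [e2, show (0:ℕ)+1=1 from rfl, gegen_one, gegen_zero]
    push_cast; ring
  | one =>
    have e3 : Gegen lam 3 x = _ := gegen_succ_succ lam 1 x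
    have e2 : Gegen lam 2 x = _ := gegen_succ_succ lam 0 x
    have f2 : Gegen (lam+1) 2 x = _ := gegen_succ_succ (lam+1) 0 x
    simp only [e3, e2, f2, show (1:ℕ)+1=2 from rfl, show (0:ℕ)+1=1 from rfl,
      gegen_one, gegen_zero]
    push_cast; ring
  | more m ih0 ih1 =>
    have eC := gegen_rec lam (m+2) x
    have eD3 := gegen_rec (lam+1) (m+1) x
    have eD2 := gegen_rec (lam+1) m x
    simp only [show m+2+2 = m+4 from rfl, show m+2+1 = m+3 from rfl,
      show m+1+2 = m+3 from rfl, show m+1+1 = m+2 from rfl] at *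
    push_cast at *
    have h23 : (((m:ℝ)+2)*((m:ℝ)+3)) ≠ 0 := by positivity
    apply mul_left_cancel₀ h23
    linear_combination (((m:ℝ)+2)*((m:ℝ)+3)) * eC
      + (2*((m:ℝ)+lam+3)*((m:ℝ)+2)*x) * ih1
      - (((m:ℝ)+2+2*lam)*((m:ℝ)+3)) * ih0
      - (2*lam*((m:ℝ)+2)*x) * eD3
      + (2*lam*((m:ℝ)+3)) * eD2

/-- relation (E): 2λ(1−x²) C_m^{λ+1} = (m+2λ) C_m^λ − (m+1) x C_{m+1}^λ -/
lemma gegen_E (lam : ℝ) (m : ℕ) (x : ℝ) :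
    2 * lam * (1 - x ^ 2) * Gegen (lam + 1) m x =
      ((m : ℝ) + 2 * lam) * Gegen lam m x - ((m : ℝ) + 1) * x * Gegen lam (m + 1) x := by
  induction m using Nat.twoStepInduction with
  | zero => rw [gegen_zero, gegen_zero, gegen_one]; push_cast; ring
  | one =>
    have e2 : Gegen lam 2 x = _ := gegen_succ_succ lam 0 x
    simp only [e2, show (0:ℕ)+1=1 from rfl, gegen_one, gegen_zero]
    push_cast; ring
  | more m ih0 ih1 =>
    have eD := gegen_rec (lam+1) m x
    have eC3 := gegen_rec lam (m+1) x
    have eC2 := gegen_rec lam m x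
    simp only [show m+2+1 = m+3 from rfl, show m+1+2 = m+3 from rfl,
      show m+1+1 = m+2 from rfl] at *
    push_cast at *
    have h2 : ((m:ℝ)+2) ≠ 0 := by positivity
    apply mul_left_cancel₀ h2
    linear_combination (2*lam*(1-x^2)) * eD
      + (2*((m:ℝ)+lam+2)*x) * ih1
      - (((m:ℝ)+2*lam+2)) * ih0
      + (((m:ℝ)+2)*x) * eC3
      - (((m:ℝ)+2*lam+2)) * eC2

lemma gegen_hasDerivAt_zero (lam x : ℝ) : HasDerivAt (Gegen lam 0) 0 x := by
  simp only [show Gegen lam 0 = fun _ => (1:ℝ) from rfl]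
  exact hasDerivAt_const x 1

lemma gegen_hasDerivAt (lam : ℝ) (n : ℕ) (x : ℝ) :
    HasDerivAt (Gegen lam (n + 1)) (2 * lam * Gegen (lam + 1) n x) x := by
  induction n using Nat.twoStepInduction generalizing x with
  | zero =>
    simp only [show Gegen lam 1 = fun r => 2 * lam * r from rfl, gegen_zero]
    simpa using (hasDerivAt_id x).const_mul (2*lam)
  | one =>
    have hfun : Gegen lam 2 = fun r : ℝ => 2*lam*(lam+1)*r^2 - lam := by
      funext r
      rw [show Gegen lam 2 r = _ from gegen_succ_succ lam 0 r]
      simp only [show (0:ℕ)+1=1 from rfl, gegen_one, gegen_zero]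
      push_cast; ring
    rw [hfun]
    have h : HasDerivAt (fun r : ℝ => 2*lam*(lam+1)*r^2 - lam)
        (2*lam*(lam+1)*(2*x) - 0) x := by
      exact ((hasDerivAt_pow 2 x).const_mul (2*lam*(lam+1))).sub (hasDerivAt_const x lam) |>.congr_deriv (by push_cast; ring)
    convert h using 1
    rw [gegen_one]; ring
  | more n ih0 ih1 =>
    have hfun : ∀ r : ℝ, Gegen lam (n+3) r =
        2*((n:ℝ)+lam+2)/((n:ℝ)+3) * (r * Gegen lam (n+2) r)
          - ((n:ℝ)+1+2*lam)/((n:ℝ)+3) * Gegen lam (n+1) r := by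
      intro r
      rw [show Gegen lam (n+3) r = _ from gegen_succ_succ lam (n+1) r]
      simp only [show n+1+1 = n+2 from rfl]
      push_cast; ring
    have h : HasDerivAt (fun r : ℝ =>
        2*((n:ℝ)+lam+2)/((n:ℝ)+3) * (r * Gegen lam (n+2) r)
          - ((n:ℝ)+1+2*lam)/((n:ℝ)+3) * Gegen lam (n+1) r)
        (2*((n:ℝ)+lam+2)/((n:ℝ)+3) * (1 * Gegen lam (n+2) x + x * (2*lam*Gegen (lam+1) (n+1) x))
          - ((n:ℝ)+1+2*lam)/((n:ℝ)+3) * (2*lam*Gegen (lam+1) n x)) x := by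
      have t1 := ((hasDerivAt_id x).mul (ih1 x)).const_mul (2*((n:ℝ)+lam+2)/((n:ℝ)+3))
      have t0 := (ih0 x).const_mul (((n:ℝ)+1+2*lam)/((n:ℝ)+3))
      exact t1.sub t0
    have h2 : HasDerivAt (Gegen lam (n+3))
        (2*((n:ℝ)+lam+2)/((n:ℝ)+3) * (1 * Gegen lam (n+2) x + x * (2*lam*Gegen (lam+1) (n+1) x))
          - ((n:ℝ)+1+2*lam)/((n:ℝ)+3) * (2*lam*Gegen (lam+1) n x)) x := by
      refine h.congr_of_eventuallyEq (Filter.Eventually.of_forall fun r => (hfun r))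
    convert h2 using 1
    have hB := gegen_B lam n x
    have hD := gegen_rec (lam+1) n x
    have h3 : ((n:ℝ)+3) ≠ 0 := by positivity
    rw [div_mul_eq_mul_div, div_mul_eq_mul_div, ← sub_div, eq_div_iff h3]
    apply mul_left_cancel₀ (show ((n:ℝ)+2) ≠ 0 by positivity)
    linear_combination (2*lam*((n:ℝ)+3)) * hD - (2*((n:ℝ)+lam+2)) * hB

/-- Wallis integral in Gamma form -/
lemma integral_sin_pow_gamma (m : ℕ) :
    ∫ θ in (0:ℝ)..π, sin θ ^ m
      = √π * Real.Gamma (((m:ℝ)+1)/2) / Real.Gamma ((m:ℝ)/2 + 1) := by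
  induction m using Nat.twoStepInduction with
  | zero =>
    simp only [pow_zero, Nat.cast_zero]
    rw [intervalIntegral.integral_const]
    norm_num
    rw [Real.Gamma_one_half_eq, Real.mul_self_sqrt pi_pos.le]
  | one =>
    simp only [pow_one, integral_sin, cos_zero, cos_pi, Nat.cast_one]
    rw [show ((1:ℝ)+1)/2 = 1 by norm_num, Real.Gamma_one,
      show (1:ℝ)/2 + 1 = 1/2 + 1 by norm_num, Real.Gamma_add_one (by norm_num : (1:ℝ)/2 ≠ 0),
      Real.Gamma_one_half_eq]
    have : √π ≠ 0 := by positivity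
    field_simp
    norm_num
  | more m ih0 ih1 =>
    rw [integral_sin_pow, ih0]
    norm_num [sin_zero, sin_pi]
    push_cast
    rw [show ((m:ℝ) + 2 + 1)/2 = ((m:ℝ)+1)/2 + 1 by ring,
      show ((m:ℝ) + 2)/2 + 1 = ((m:ℝ)/2 + 1) + 1 by ring,
      Real.Gamma_add_one (s := ((m:ℝ)+1)/2) (by positivity),
      Real.Gamma_add_one (s := (m:ℝ)/2+1) (by positivity)]
    have g2 : Real.Gamma ((m:ℝ)/2+1) ≠ 0 := (Real.Gamma_pos_of_pos (by positivity)).ne'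
    have g1 : Real.Gamma (((m:ℝ)+1)/2) ≠ 0 := (Real.Gamma_pos_of_pos (by positivity)).ne'
    field_simp

/-- derivative of Φ(θ) = (k+1)·sin^{k+2} θ · G_n^{λ+1}(cos θ), λ = (k+1)/2 -/
lemma phi_hasDerivAt (k n : ℕ) (θ : ℝ) :
    HasDerivAt (fun t => ((k:ℝ)+1) * (sin t ^ (k+2) * Gegen (((k:ℝ)+3)/2) n (cos t)))
      ((((n:ℝ)+1) * ((n:ℝ)+(k:ℝ)+2)) *
        (sin θ ^ (k+1) * Gegen (((k:ℝ)+1)/2) (n+1) (cos θ))) θ := by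
  have t1 : HasDerivAt (fun t : ℝ => sin t ^ (k+2))
      (((k:ℝ)+2) * sin θ ^ (k+1) * cos θ) θ := by
    exact ((Real.hasDerivAt_sin θ).pow (k+2)).congr_deriv
      (by rw [show k+2-1 = k+1 from rfl]; push_cast; ring)
  cases n with
  | zero =>
    simp only [show (0:ℕ)+1 = 1 from rfl, gegen_zero, gegen_one, mul_one, Nat.cast_zero]
    have h := t1.const_mul ((k:ℝ)+1)
    refine h.congr_deriv ?_
    ring
  | succ m =>
    have t2 : HasDerivAt (fun t : ℝ => Gegen (((k:ℝ)+3)/2) (m+1) (cos t))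
        (2 * (((k:ℝ)+3)/2) * Gegen (((k:ℝ)+3)/2 + 1) m (cos θ) * (-sin θ)) θ :=
      (gegen_hasDerivAt (((k:ℝ)+3)/2) m (cos θ)).comp θ (Real.hasDerivAt_cos θ)
    have h := (t1.mul t2).const_mul ((k:ℝ)+1)
    refine h.congr_deriv ?_
    symm
    simp only [show m+1+1 = m+2 from rfl]
    have hE := gegen_E (((k:ℝ)+3)/2) m (cos θ)
    have hB := gegen_B (((k:ℝ)+1)/2) m (cos θ)
    have hs : sin θ ^ 2 = 1 - cos θ ^ 2 := Real.sin_sq θ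
    have h32 : (((k:ℝ)+1)/2) + 1 = ((k:ℝ)+3)/2 := by ring
    rw [h32] at hB
    push_cast
    have hpow2 : sin θ ^ (k+2) = sin θ ^ (k+1) * sin θ := by ring
    rw [hpow2]
    linear_combination (((k:ℝ)+3)*((k:ℝ)+1)* sin θ ^(k+1) * Gegen (((k:ℝ)+3)/2+1) m (cos θ)) * hs
      + (((k:ℝ)+1)* sin θ ^(k+1)) * hE
      + (((m:ℝ)+(k:ℝ)+3)* sin θ ^(k+1)) * hB

attribute [fun_prop] continuous_gegen

def NN (k m : ℕ) : ℝ :=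
  ∫ θ in (0:ℝ)..π, Gegen (((k:ℝ)+1)/2) m (cos θ)^2 * sin θ^(k+1)

def JJ (k m : ℕ) : ℝ :=
  ∫ θ in (0:ℝ)..π, sin θ^(k+2) * Gegen (((k:ℝ)+3)/2) m (cos θ)

lemma JJ_shift (k m : ℕ) :
    JJ (k+2) m = ∫ θ in (0:ℝ)..π, sin θ^(k+4) * Gegen (((k:ℝ)+5)/2) m (cos θ) := by
  simp only [JJ, show k+2+2 = k+4 from rfl]
  push_cast
  simp only [show ((k:ℝ)+2+3)/2 = ((k:ℝ)+5)/2 by ring]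

lemma NN_shift (k m : ℕ) :
    NN (k+2) m = ∫ θ in (0:ℝ)..π, Gegen (((k:ℝ)+3)/2) m (cos θ)^2 * sin θ^(k+3) := by
  simp only [NN, show k+2+1 = k+3 from rfl]
  push_cast
  simp only [show ((k:ℝ)+2+1)/2 = ((k:ℝ)+3)/2 by ring]

lemma JJ_zero (k : ℕ) :
    JJ k 0 = √π * Real.Gamma (((k:ℝ)+3)/2) / Real.Gamma (((k:ℝ)+4)/2) := by
  simp only [JJ, gegen_zero, mul_one]
  rw [integral_sin_pow_gamma (k+2)]
  push_cast
  rw [show ((k:ℝ)+2+1)/2 = ((k:ℝ)+3)/2 by ring, show ((k:ℝ)+2)/2+1 = ((k:ℝ)+4)/2 by ring]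

lemma NN_zero (k : ℕ) :
    NN k 0 = √π * Real.Gamma (((k:ℝ)+2)/2) / Real.Gamma (((k:ℝ)+3)/2) := by
  simp only [NN, gegen_zero, one_pow, one_mul]
  rw [integral_sin_pow_gamma (k+1)]
  push_cast
  rw [show ((k:ℝ)+1+1)/2 = ((k:ℝ)+2)/2 by ring, show ((k:ℝ)+1)/2+1 = ((k:ℝ)+3)/2 by ring]

/-- derivative for the J-recursion -/
lemma psi_hasDerivAt (k m : ℕ) (θ : ℝ) :
    HasDerivAt (fun t => sin t^(k+3) * Gegen (((k:ℝ)+3)/2) (m+1) (cos t))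
      (((k:ℝ)+3) * (cos θ * sin θ^(k+2) * Gegen (((k:ℝ)+3)/2) (m+1) (cos θ)
        - sin θ^(k+4) * Gegen (((k:ℝ)+5)/2) m (cos θ))) θ := by
  have t1 : HasDerivAt (fun t : ℝ => sin t ^ (k+3))
      (((k:ℝ)+3) * sin θ ^ (k+2) * cos θ) θ := by
    exact ((Real.hasDerivAt_sin θ).pow (k+3)).congr_deriv
      (by rw [show k+3-1 = k+2 from rfl]; push_cast; ring)
  have t2 : HasDerivAt (fun t : ℝ => Gegen (((k:ℝ)+3)/2) (m+1) (cos t))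
      (2 * (((k:ℝ)+3)/2) * Gegen (((k:ℝ)+3)/2 + 1) m (cos θ) * (-sin θ)) θ :=
    (gegen_hasDerivAt (((k:ℝ)+3)/2) m (cos θ)).comp θ (Real.hasDerivAt_cos θ)
  have h := t1.mul t2
  refine h.congr_deriv ?_
  rw [show (((k:ℝ)+3)/2) + 1 = ((k:ℝ)+5)/2 by ring]
  ring

lemma cosint (k m : ℕ) :
    ∫ θ in (0:ℝ)..π, cos θ * sin θ ^ (k+2) * Gegen (((k:ℝ)+3)/2) (m+1) (cos θ)
      = JJ (k+2) m := by
  have h0 : (∫ θ in (0:ℝ)..π, ((k:ℝ)+3) * (cos θ * sin θ^(k+2) * Gegen (((k:ℝ)+3)/2) (m+1) (cos θ)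
        - sin θ^(k+4) * Gegen (((k:ℝ)+5)/2) m (cos θ))) = 0 := by
    rw [intervalIntegral.integral_eq_sub_of_hasDerivAt
      (f := fun t => sin t^(k+3) * Gegen (((k:ℝ)+3)/2) (m+1) (cos t))
      (fun x _ => psi_hasDerivAt k m x)
      (by apply Continuous.intervalIntegrable; fun_prop)]
    simp [sin_pi, zero_pow]
  rw [intervalIntegral.integral_const_mul] at h0
  have h3 : ((k:ℝ)+3) ≠ 0 := by positivity
  have h0' := (mul_eq_zero.mp h0).resolve_left h3
  rw [intervalIntegral.integral_sub
    (by apply Continuous.intervalIntegrable; fun_prop)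
    (by apply Continuous.intervalIntegrable; fun_prop)] at h0'
  rw [JJ_shift]
  linarith [h0']

lemma JJ_rec (k m : ℕ) :
    ((m:ℝ)+2) * JJ k (m+2)
      = 2*((m:ℝ)+1+((k:ℝ)+3)/2) * JJ (k+2) m - ((m:ℝ)+(k:ℝ)+3) * JJ k m := by
  have h1 : ((m:ℝ)+2) * JJ k (m+2) = ∫ θ in (0:ℝ)..π,
      ((2*((m:ℝ)+1+((k:ℝ)+3)/2)) * (cos θ * sin θ^(k+2) * Gegen (((k:ℝ)+3)/2) (m+1) (cos θ))
      - ((m:ℝ)+(k:ℝ)+3) * (sin θ^(k+2) * Gegen (((k:ℝ)+3)/2) m (cos θ))) := by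
    rw [JJ, ← intervalIntegral.integral_const_mul]
    apply intervalIntegral.integral_congr
    intro θ _
    have hr := gegen_rec (((k:ℝ)+3)/2) m (cos θ)
    simp only
    linear_combination (sin θ^(k+2)) * hr
  rw [h1, intervalIntegral.integral_sub
    (by apply Continuous.intervalIntegrable; fun_prop)
    (by apply Continuous.intervalIntegrable; fun_prop),
    intervalIntegral.integral_const_mul, intervalIntegral.integral_const_mul, cosint]
  rw [show (∫ x in (0:ℝ)..π, sin x^(k+2) * Gegen (((k:ℝ)+3)/2) m (cos x)) = JJ k m from rfl]

lemma NN_rec (k m : ℕ) :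
    (((m:ℝ)+1) * ((m:ℝ)+(k:ℝ)+2)) * NN k (m+1) = ((k:ℝ)+1)^2 * NN (k+2) m := by
  have hu : ∀ x ∈ Set.uIcc (0:ℝ) π,
      HasDerivAt (fun t => Gegen (((k:ℝ)+1)/2) (m+1) (cos t))
        ((fun t => -(((k:ℝ)+1) * (sin t * Gegen (((k:ℝ)+3)/2) m (cos t)))) x) x := by
    intro x _
    have h := (gegen_hasDerivAt (((k:ℝ)+1)/2) m (cos x)).comp x (Real.hasDerivAt_cos x)
    rw [show (((k:ℝ)+1)/2) + 1 = ((k:ℝ)+3)/2 by ring] at h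
    show HasDerivAt _ (-(((k:ℝ)+1) * (sin x * Gegen (((k:ℝ)+3)/2) m (cos x)))) x
    refine h.congr_deriv ?_
    ring
  have hv : ∀ x ∈ Set.uIcc (0:ℝ) π,
      HasDerivAt (fun t => ((k:ℝ)+1) * (sin t^(k+2) * Gegen (((k:ℝ)+3)/2) m (cos t)))
        ((fun t => (((m:ℝ)+1) * ((m:ℝ)+(k:ℝ)+2)) *
          (sin t^(k+1) * Gegen (((k:ℝ)+1)/2) (m+1) (cos t))) x) x := by
    intro x _
    exact phi_hasDerivAt k m x
  have ibp := intervalIntegral.integral_mul_deriv_eq_deriv_mul hu hv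
    (by apply Continuous.intervalIntegrable; fun_prop)
    (by apply Continuous.intervalIntegrable; fun_prop)
  simp only [sin_pi, sin_zero, zero_pow (by omega : k+2 ≠ 0), zero_mul, mul_zero, sub_zero,
    zero_sub] at ibp
  have hL : (∫ x in (0:ℝ)..π, Gegen (((k:ℝ)+1)/2) (m+1) (cos x) *
      ((((m:ℝ)+1) * ((m:ℝ)+(k:ℝ)+2)) * (sin x^(k+1) * Gegen (((k:ℝ)+1)/2) (m+1) (cos x))))
      = (((m:ℝ)+1) * ((m:ℝ)+(k:ℝ)+2)) * NN k (m+1) := by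
    rw [NN, ← intervalIntegral.integral_const_mul]
    apply intervalIntegral.integral_congr
    intro θ _
    simp only
    ring
  have hR : (∫ x in (0:ℝ)..π, -(((k:ℝ)+1) * (sin x * Gegen (((k:ℝ)+3)/2) m (cos x))) *
      (((k:ℝ)+1) * (sin x^(k+2) * Gegen (((k:ℝ)+3)/2) m (cos x))))
      = -(((k:ℝ)+1)^2 * NN (k+2) m) := by
    rw [NN_shift, ← intervalIntegral.integral_const_mul, ← intervalIntegral.integral_neg]
    apply intervalIntegral.integral_congr
    intro θ _
    simp only
    ring
  rw [hL, hR] at ibp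
  linarith [ibp]

lemma num_eq (k n : ℕ) :
    (∫ θ in (0:ℝ)..π, Gegen (((k:ℝ)+1)/2) (n+1) (cos θ) * sin θ^(k+1) * (1 - 2*θ/π))
      = 2/π * (((k:ℝ)+1) / (((n:ℝ)+1)*((n:ℝ)+(k:ℝ)+2))) * JJ k n := by
  have hc : (((n:ℝ)+1)*((n:ℝ)+(k:ℝ)+2)) ≠ 0 := by positivity
  have hu : ∀ x ∈ Set.uIcc (0:ℝ) π,
      HasDerivAt (fun θ : ℝ => 1 - 2*θ/π) ((fun _ : ℝ => -(2/π)) x) x := by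
    intro x _
    have h := (((hasDerivAt_id x).const_mul (2:ℝ)).div_const π).const_sub 1
    simpa using h
  have hv : ∀ x ∈ Set.uIcc (0:ℝ) π,
      HasDerivAt (fun t => ((k:ℝ)+1) * (sin t^(k+2) * Gegen (((k:ℝ)+3)/2) n (cos t)))
        ((fun t => (((n:ℝ)+1) * ((n:ℝ)+(k:ℝ)+2)) *
          (sin t^(k+1) * Gegen (((k:ℝ)+1)/2) (n+1) (cos t))) x) x :=
    fun x _ => phi_hasDerivAt k n x
  have ibp := intervalIntegral.integral_mul_deriv_eq_deriv_mul hu hv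
    (by apply Continuous.intervalIntegrable; fun_prop)
    (by apply Continuous.intervalIntegrable; fun_prop)
  simp only [sin_pi, sin_zero, zero_pow (by omega : k+2 ≠ 0), zero_mul, mul_zero, sub_zero,
    zero_sub] at ibp
  have hL : (∫ x in (0:ℝ)..π, (1 - 2*x/π) *
      ((((n:ℝ)+1) * ((n:ℝ)+(k:ℝ)+2)) * (sin x^(k+1) * Gegen (((k:ℝ)+1)/2) (n+1) (cos x))))
      = (((n:ℝ)+1) * ((n:ℝ)+(k:ℝ)+2)) *
        ∫ θ in (0:ℝ)..π, Gegen (((k:ℝ)+1)/2) (n+1) (cos θ) * sin θ^(k+1) * (1 - 2*θ/π) := by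
    rw [← intervalIntegral.integral_const_mul]
    apply intervalIntegral.integral_congr
    intro θ _
    simp only
    ring
  have hR : (∫ x in (0:ℝ)..π, (-(2/π)) *
      (((k:ℝ)+1) * (sin x^(k+2) * Gegen (((k:ℝ)+3)/2) n (cos x))))
      = -(2/π) * (((k:ℝ)+1) * JJ k n) := by
    rw [intervalIntegral.integral_const_mul, intervalIntegral.integral_const_mul]
    rw [show (∫ x in (0:ℝ)..π, sin x^(k+2) * Gegen (((k:ℝ)+3)/2) n (cos x)) = JJ k n from rfl]
  rw [hL, hR] at ibp
  apply mul_left_cancel₀ hc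
  rw [ibp]
  have hπ : (π:ℝ) ≠ 0 := pi_ne_zero
  field_simp

lemma gamma_pos' (x : ℝ) (h : 0 < x) : Real.Gamma x ≠ 0 := (Real.Gamma_pos_of_pos h).ne'

lemma JJ_even (j : ℕ) : ∀ k : ℕ, JJ k (2*j)
    = Real.Gamma ((j:ℝ)+1/2) * Real.Gamma (((k:ℝ)+3)/2+j)
      / ((Nat.factorial j : ℝ) * Real.Gamma (((k:ℝ)+4)/2+j)) := by
  induction j with
  | zero =>
    intro k
    simp only [Nat.mul_zero, JJ_zero, Nat.cast_zero, Nat.factorial_zero]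
    rw [show ((0:ℝ)+1/2) = 1/2 by norm_num, Real.Gamma_one_half_eq]
    push_cast
    ring_nf
  | succ j ih =>
    intro k
    have hrec := JJ_rec k (2*j)
    rw [ih k, ih (k+2)] at hrec
    push_cast at hrec
    have h2 : ((2*(j:ℝ))+2) ≠ 0 := by positivity
    have e1 : Real.Gamma ((j:ℝ)+1+1/2) = ((j:ℝ)+1/2) * Real.Gamma ((j:ℝ)+1/2) := by
      rw [show ((j:ℝ)+1+1/2) = ((j:ℝ)+1/2)+1 by ring, Real.Gamma_add_one (by positivity)]
    have e2 : Real.Gamma (((k:ℝ)+3)/2+((j:ℝ)+1)) = (((k:ℝ)+3)/2+j) * Real.Gamma (((k:ℝ)+3)/2+j) := by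
      rw [show (((k:ℝ)+3)/2+((j:ℝ)+1)) = (((k:ℝ)+3)/2+j)+1 by ring,
        Real.Gamma_add_one (by positivity)]
    have e3 : Real.Gamma (((k:ℝ)+4)/2+((j:ℝ)+1)) = (((k:ℝ)+4)/2+j) * Real.Gamma (((k:ℝ)+4)/2+j) := by
      rw [show (((k:ℝ)+4)/2+((j:ℝ)+1)) = (((k:ℝ)+4)/2+j)+1 by ring,
        Real.Gamma_add_one (by positivity)]
    have e4 : Real.Gamma (((k:ℝ)+2+3)/2+j) = (((k:ℝ)+3)/2+j) * Real.Gamma (((k:ℝ)+3)/2+j) := by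
      rw [show (((k:ℝ)+2+3)/2+(j:ℝ)) = (((k:ℝ)+3)/2+j)+1 by ring,
        Real.Gamma_add_one (by positivity)]
    have e5 : Real.Gamma (((k:ℝ)+2+4)/2+j) = (((k:ℝ)+4)/2+j) * Real.Gamma (((k:ℝ)+4)/2+j) := by
      rw [show (((k:ℝ)+2+4)/2+(j:ℝ)) = (((k:ℝ)+4)/2+j)+1 by ring,
        Real.Gamma_add_one (by positivity)]
    rw [e4, e5] at hrec
    have hJ : JJ k (2*(j+1)) = JJ k (2*j+2) := by norm_num [Nat.mul_succ]
    rw [hJ]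
    have hgoal : JJ k (2*j+2) = (2*(2*(j:ℝ)+1+((k:ℝ)+3)/2)
        * (Real.Gamma ((j:ℝ)+1/2) * ((((k:ℝ)+3)/2+j) * Real.Gamma (((k:ℝ)+3)/2+j))
          / ((Nat.factorial j : ℝ) * ((((k:ℝ)+4)/2+j) * Real.Gamma (((k:ℝ)+4)/2+j))))
        - (2*(j:ℝ)+(k:ℝ)+3) * (Real.Gamma ((j:ℝ)+1/2) * Real.Gamma (((k:ℝ)+3)/2+j)
          / ((Nat.factorial j : ℝ) * Real.Gamma (((k:ℝ)+4)/2+j)))) / (2*(j:ℝ)+2) := by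
      rw [eq_div_iff h2]
      linear_combination hrec
    rw [hgoal]
    push_cast [Nat.factorial_succ]
    rw [e1, e2, e3]
    have g1 : Real.Gamma (((k:ℝ)+4)/2+j) ≠ 0 := gamma_pos' _ (by positivity)
    have g2 : ((Nat.factorial j : ℝ)) ≠ 0 := by positivity
    have g3 : (((k:ℝ)+4)/2+(j:ℝ)) ≠ 0 := by positivity
    field_simp
    ring

lemma NN_closed (m : ℕ) : ∀ k : ℕ, NN k m
    = π * (2:ℝ)^(-(k:ℝ)) * Real.Gamma ((m:ℝ)+(k:ℝ)+1)
      / (((m:ℝ)+((k:ℝ)+1)/2) * Real.Gamma (((k:ℝ)+1)/2)^2 * (Nat.factorial m : ℝ)) := by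
  induction m with
  | zero =>
    intro k
    rw [NN_zero]
    simp only [Nat.cast_zero, Nat.factorial_zero, Nat.cast_one, mul_one, zero_add]
    have dup := Real.Gamma_mul_Gamma_add_half (((k:ℝ)+1)/2)
    rw [show (((k:ℝ)+1)/2 + 1/2) = ((k:ℝ)+2)/2 by ring,
      show (2*(((k:ℝ)+1)/2)) = (k:ℝ)+1 by ring,
      show ((1:ℝ) - ((k:ℝ)+1)) = -(k:ℝ) by ring] at dup
    have e1 : Real.Gamma (((k:ℝ)+3)/2) = (((k:ℝ)+1)/2) * Real.Gamma (((k:ℝ)+1)/2) := by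
      rw [show (((k:ℝ)+3)/2) = ((k:ℝ)+1)/2 + 1 by ring, Real.Gamma_add_one (by positivity)]
    rw [e1]
    have g1 : Real.Gamma (((k:ℝ)+1)/2) ≠ 0 := gamma_pos' _ (by positivity)
    have g2 : Real.Gamma (((k:ℝ)+2)/2) ≠ 0 := gamma_pos' _ (by positivity)
    have hπ : √π ≠ 0 := by positivity
    have hsq : √π * √π = π := Real.mul_self_sqrt pi_pos.le
    have hk1 : ((k:ℝ)+1) ≠ 0 := by positivity
    have hp : (2:ℝ)^(-(k:ℝ)) ≠ 0 := by positivity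
    rw [div_eq_div_iff (by positivity) (by positivity)]
    linear_combination (((k:ℝ)+1)/2 * Real.Gamma (((k:ℝ)+1)/2) * √π) * dup
      + (((k:ℝ)+1)/2 * Real.Gamma (((k:ℝ)+1)/2) * Real.Gamma ((k:ℝ)+1) * (2:ℝ)^(-(k:ℝ))) * hsq
  | succ m ih =>
    intro k
    have hrec := NN_rec k m
    rw [ih (k+2)] at hrec
    push_cast at hrec
    have e1 : Real.Gamma ((m:ℝ)+((k:ℝ)+2)+1) = ((m:ℝ)+(k:ℝ)+2) * Real.Gamma ((m:ℝ)+(k:ℝ)+2) := by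
      rw [show ((m:ℝ)+((k:ℝ)+2)+1) = ((m:ℝ)+(k:ℝ)+2)+1 by ring,
        Real.Gamma_add_one (by positivity)]
    have e2 : Real.Gamma (((k:ℝ)+2+1)/2) = (((k:ℝ)+1)/2) * Real.Gamma (((k:ℝ)+1)/2) := by
      rw [show (((k:ℝ)+2+1)/2) = ((k:ℝ)+1)/2 + 1 by ring, Real.Gamma_add_one (by positivity)]
    have e3 : (2:ℝ)^(-((k:ℝ)+2)) = (2:ℝ)^(-(k:ℝ)) * (1/4) := by
      rw [show (-((k:ℝ)+2)) = -(k:ℝ) + (-2) by ring, Real.rpow_add two_pos]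
      norm_num
    rw [e1, e2] at hrec
    rw [show ((((k:ℕ)+2):ℝ)) = (k:ℝ)+2 from by push_cast; ring] at hrec
    rw [e3] at hrec
    have hm2 : (((m:ℝ)+1) * ((m:ℝ)+(k:ℝ)+2)) ≠ 0 := by positivity
    have hgoal : NN k (m+1) = (((k:ℝ)+1)^2 *
        (π * ((2:ℝ)^(-(k:ℝ)) * (1/4)) * (((m:ℝ)+(k:ℝ)+2) * Real.Gamma ((m:ℝ)+(k:ℝ)+2))
          / (((m:ℝ)+((k:ℝ)+2+1)/2) * ((((k:ℝ)+1)/2) * Real.Gamma (((k:ℝ)+1)/2))^2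
            * (Nat.factorial m : ℝ)))) / (((m:ℝ)+1) * ((m:ℝ)+(k:ℝ)+2)) := by
      rw [eq_div_iff hm2]
      linear_combination hrec
    rw [hgoal]
    push_cast [Nat.factorial_succ]
    have g1 : Real.Gamma (((k:ℝ)+1)/2) ≠ 0 := gamma_pos' _ (by positivity)
    have g2 : (Nat.factorial m : ℝ) ≠ 0 := by positivity
    have hp : (2:ℝ)^(-(k:ℝ)) ≠ 0 := by positivity
    field_simp
    ring

lemma even_vanish (k n : ℕ) :
    (∫ θ in (0:ℝ)..π, Gegen (((k:ℝ)+1)/2) (2*n) (cos θ) * sin θ^(k+1) * (1 - 2*θ/π)) = 0 := by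
  set f : ℝ → ℝ := fun θ => Gegen (((k:ℝ)+1)/2) (2*n) (cos θ) * sin θ^(k+1) * (1 - 2*θ/π)
    with hf
  have h : (∫ x in (0:ℝ)..π, f (π - x)) = ∫ x in (0:ℝ)..π, f x := by
    simpa using intervalIntegral.integral_comp_sub_left f π
  have hpt : (∫ x in (0:ℝ)..π, f (π - x)) = ∫ x in (0:ℝ)..π, -(f x) := by
    apply intervalIntegral.integral_congr
    intro x _
    simp only [hf, cos_pi_sub, sin_pi_sub, gegen_neg, pow_mul]
    norm_num
    have hπ : (π:ℝ) ≠ 0 := pi_ne_zero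
    field_simp
    ring
  rw [intervalIntegral.integral_neg] at hpt
  rw [hpt] at h
  linarith [h]

end ChentsovAux

open ChentsovAux in
/-- Closed form for the Schoenberg coefficients of the Chentsov covariance on the d-sphere. -/
theorem schoenberg_coeff_chentsov
    (d : ℕ) (hd : 2 ≤ d) :
    (∀ n : ℕ, SchoenbergCoeff d (fun θ => 1 - 2 * θ / π) (2 * n) = 0) ∧
    (∀ n : ℕ, SchoenbergCoeff d (fun θ => 1 - 2 * θ / π) (2 * n + 1)
      = ((((d : ℝ) - 1) / 2) + 2 * n + 1) * Real.Gamma (((d : ℝ) - 1) / 2) *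
          Real.Gamma ((((d : ℝ) - 1) / 2) + 1) / π ^ 2 *
          (Real.Gamma ((n : ℝ) + 1 / 2) ^ 2 /
            Real.Gamma ((((d : ℝ) - 1) / 2) + n + 3 / 2) ^ 2)) := by
  obtain ⟨k, rfl⟩ : ∃ k, d = k + 2 := ⟨d - 2, by omega⟩
  have hcast : (((k+2 : ℕ) : ℝ) - 1) / 2 = ((k:ℝ)+1)/2 := by push_cast; ring
  constructor
  · intro n
    rw [SchoenbergCoeff]
    simp only [hcast, show k+2-1 = k+1 from rfl]
    rw [even_vanish k n]
    simp
  · intro n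
    rw [SchoenbergCoeff]
    simp only [hcast, show k+2-1 = k+1 from rfl]
    rw [show (∫ θ in (0:ℝ)..π, Gegen (((k:ℝ)+1)/2) (2*n+1) (Real.cos θ) * Real.sin θ ^ (k+1)
        * (fun θ => 1 - 2*θ/π) θ)
      = (∫ θ in (0:ℝ)..π, Gegen (((k:ℝ)+1)/2) (2*n+1) (Real.cos θ) * Real.sin θ ^ (k+1)
        * (1 - 2*θ/π)) from rfl]
    rw [num_eq k (2*n)]
    rw [show GegenNormSq (k+2) (2*n+1) = NN k (2*n+1) from by
      rw [GegenNormSq, NN]; simp only [hcast, show k+2-1 = k+1 from rfl]]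
    rw [NN_closed (2*n+1) k, JJ_even n k]
    push_cast
    -- rewrite Gamma arguments to common normal forms
    rw [show (((k:ℝ)+1)/2) + (n:ℝ) + 3/2 = ((k:ℝ)+4)/2+(n:ℝ) by ring,
      show (((k:ℝ)+1)/2) + 1 = ((k:ℝ)+3)/2 by ring]
    have e3 : Real.Gamma (((k:ℝ)+3)/2) = (((k:ℝ)+1)/2) * Real.Gamma (((k:ℝ)+1)/2) := by
      rw [show (((k:ℝ)+3)/2) = ((k:ℝ)+1)/2 + 1 by ring, Real.Gamma_add_one (by positivity)]
    rw [e3]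
    -- key facts
    have hF2 : ((Nat.factorial (2*n+1) : ℕ) : ℝ) = Real.Gamma (2*(n:ℝ)+2) := by
      rw [show (2*(n:ℝ)+2) = ((2*n+1 : ℕ) : ℝ) + 1 by push_cast; ring,
        Real.Gamma_nat_eq_factorial]
    have hF : Real.Gamma ((n:ℝ)+1) = ((Nat.factorial n : ℕ) : ℝ) := by
      rw [show ((n:ℝ)+1) = ((n:ℕ):ℝ) + 1 from rfl, Real.Gamma_nat_eq_factorial]
    have hd1 := Real.Gamma_mul_Gamma_add_half ((n:ℝ)+1)
    rw [show ((n:ℝ)+1+1/2) = ((n:ℝ)+1/2)+1 by ring,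
      Real.Gamma_add_one (s := (n:ℝ)+1/2) (by positivity),
      show (2*((n:ℝ)+1)) = 2*(n:ℝ)+2 by ring,
      show ((1:ℝ) - (2*(n:ℝ)+2)) = -(2*(n:ℝ)+1) by ring, hF] at hd1
    have hd2 := Real.Gamma_mul_Gamma_add_half ((n:ℝ)+((k:ℝ)+3)/2)
    rw [show ((n:ℝ)+((k:ℝ)+3)/2+1/2) = ((k:ℝ)+4)/2+(n:ℝ) by ring,
      show ((n:ℝ)+((k:ℝ)+3)/2) = ((k:ℝ)+3)/2+(n:ℝ) by ring,
      show (2*(((k:ℝ)+3)/2+(n:ℝ))) = (2*(n:ℝ)+(k:ℝ)+2)+1 by ring,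
      Real.Gamma_add_one (s := 2*(n:ℝ)+(k:ℝ)+2) (by positivity),
      show ((1:ℝ) - (2*(n:ℝ)+(k:ℝ)+2+1)) = -(2*(n:ℝ)+(k:ℝ)+2) by ring] at hd2
    have hpow : (2:ℝ)^(-(k:ℝ)) * (2:ℝ)^(-(2*(n:ℝ)+1)) = 2 * (2:ℝ)^(-(2*(n:ℝ)+(k:ℝ)+2)) := by
      rw [← Real.rpow_add two_pos]
      rw [show (-(k:ℝ) + -(2*(n:ℝ)+1)) = (-(2*(n:ℝ)+(k:ℝ)+2)) + 1 by ring,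
        Real.rpow_add two_pos, Real.rpow_one]
      ring
    -- nonzeroness
    have hπ : (π:ℝ) ≠ 0 := pi_ne_zero
    have hs : √π ≠ 0 := by positivity
    have gA : Real.Gamma ((n:ℝ)+1/2) ≠ 0 := gamma_pos' _ (by positivity)
    have gB3 : Real.Gamma (((k:ℝ)+3)/2+(n:ℝ)) ≠ 0 := gamma_pos' _ (by positivity)
    have gB4 : Real.Gamma (((k:ℝ)+4)/2+(n:ℝ)) ≠ 0 := gamma_pos' _ (by positivity)
    have gG : Real.Gamma (((k:ℝ)+1)/2) ≠ 0 := gamma_pos' _ (by positivity)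
    have gC : Real.Gamma (2*(n:ℝ)+(k:ℝ)+2) ≠ 0 := gamma_pos' _ (by positivity)
    have gF2 : Real.Gamma (2*(n:ℝ)+2) ≠ 0 := gamma_pos' _ (by positivity)
    have gF : ((Nat.factorial n : ℕ) : ℝ) ≠ 0 := by positivity
    have hP : (2:ℝ)^(-(k:ℝ)) ≠ 0 := by positivity
    have hP2 : (2:ℝ)^(-(2*(n:ℝ)+1)) ≠ 0 := by positivity
    have hP3 : (2:ℝ)^(-(2*(n:ℝ)+(k:ℝ)+2)) ≠ 0 := by positivity
    -- the key multiplicative identity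
    have key : (4:ℝ) * Real.Gamma (2*(n:ℝ)+2) * Real.Gamma (((k:ℝ)+3)/2+(n:ℝ))
        * Real.Gamma (((k:ℝ)+4)/2+(n:ℝ))
      = Real.Gamma ((n:ℝ)+1/2) * (2:ℝ)^(-(k:ℝ)) * Real.Gamma (2*(n:ℝ)+(k:ℝ)+2)
        * (2*(n:ℝ)+1) * (2*(n:ℝ)+(k:ℝ)+2) * ((Nat.factorial n : ℕ) : ℝ) := by
      apply mul_left_cancel₀ (mul_ne_zero hP2 hs)
      linear_combination (-(4 * Real.Gamma (((k:ℝ)+3)/2+(n:ℝ)) * Real.Gamma (((k:ℝ)+4)/2+(n:ℝ)))) * hd1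
        + (2 * (2*(n:ℝ)+1) * ((Nat.factorial n : ℕ) : ℝ) * Real.Gamma ((n:ℝ)+1/2)) * hd2
        + (-((2*(n:ℝ)+1) * (2*(n:ℝ)+(k:ℝ)+2) * Real.Gamma ((n:ℝ)+1/2)
            * Real.Gamma (2*(n:ℝ)+(k:ℝ)+2) * ((Nat.factorial n : ℕ) : ℝ) * √π)) * hpow
    rw [show (2*(n:ℝ)+1+(k:ℝ)+1) = 2*(n:ℝ)+(k:ℝ)+2 by ring, hF2]
    have hD : (2*(n:ℝ)+1) ≠ 0 := by positivity
    have hDD : (2*(n:ℝ)+1+((k:ℝ)+1)/2) ≠ 0 := by positivity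
    have hN : (2*(n:ℝ)+(k:ℝ)+2) ≠ 0 := by positivity
    set A := Real.Gamma ((n:ℝ)+1/2) with hA
    set B3 := Real.Gamma (((k:ℝ)+3)/2+(n:ℝ)) with hB3
    set B4 := Real.Gamma (((k:ℝ)+4)/2+(n:ℝ)) with hB4
    set G := Real.Gamma (((k:ℝ)+1)/2) with hG
    set C := Real.Gamma (2*(n:ℝ)+(k:ℝ)+2) with hC
    set F2 := Real.Gamma (2*(n:ℝ)+2) with hF2'
    set F := ((Nat.factorial n : ℕ) : ℝ) with hFn
    set P := (2:ℝ)^(-(k:ℝ)) with hPd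
    field_simp
    linear_combination (2*(2*(n:ℝ)+1)+((k:ℝ)+1)) * key
end
end

section
/- Let d ≥ 2, λ = (d−1)/2, and let b_{n,d} be the Schoenberg coefficients of the Chentsov covariance K_C(θ) = 1 − 2θ/π on 𝕊^d. Then b_{1,d} = Γ(λ) Γ(λ+2) / (π · Γ(λ+3/2)²), and for every integer n ≥ 1, b_{2n+1,d} = ((λ+2n+1)/(λ+2n−1)) · ((n−1/2)² / (λ+n+1/2)²) · b_{2n−1,d}. -/
open MeasureTheory Real intervalIntegral

noncomputable section

namespace Chents

@[simp] lemma Gegen_zero (lam r : ℝ) : Gegen lam 0 r = 1 := rfl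
@[simp] lemma Gegen_one (lam r : ℝ) : Gegen lam 1 r = 2 * lam * r := rfl
lemma Gegen_add_two (lam : ℝ) (n : ℕ) (r : ℝ) :
    Gegen lam (n+2) r = 2 * ((n : ℝ) + 2 + lam - 1) / ((n : ℝ) + 2) * r * Gegen lam (n + 1) r
        - ((n : ℝ) + 2 + 2 * lam - 2) / ((n : ℝ) + 2) * Gegen lam n r := rfl

/-- denominator-free recurrence -/
lemma Gegen_rec (lam : ℝ) (n : ℕ) (r : ℝ) :
    ((n:ℝ) + 2) * Gegen lam (n+2) r
      = 2 * ((n:ℝ) + 1 + lam) * r * Gegen lam (n+1) r - ((n:ℝ) + 2*lam) * Gegen lam n r := by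
  have h : ((n:ℝ) + 2) ≠ 0 := by positivity
  rw [Gegen_add_two]
  field_simp
  ring

def DGegen (lam : ℝ) : ℕ → ℝ → ℝ
  | 0, _ => 0
  | 1, _ => 2 * lam
  | n + 2, r =>
      2 * ((n : ℝ) + 2 + lam - 1) / ((n : ℝ) + 2) * (Gegen lam (n + 1) r + r * DGegen lam (n + 1) r)
        - ((n : ℝ) + 2 + 2 * lam - 2) / ((n : ℝ) + 2) * DGegen lam n r

@[simp] lemma DGegen_zero (lam r : ℝ) : DGegen lam 0 r = 0 := rfl
@[simp] lemma DGegen_one (lam r : ℝ) : DGegen lam 1 r = 2 * lam := rfl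
lemma DGegen_add_two (lam : ℝ) (n : ℕ) (r : ℝ) :
    DGegen lam (n+2) r = 2 * ((n : ℝ) + 2 + lam - 1) / ((n : ℝ) + 2) * (Gegen lam (n + 1) r + r * DGegen lam (n + 1) r)
        - ((n : ℝ) + 2 + 2 * lam - 2) / ((n : ℝ) + 2) * DGegen lam n r := rfl

lemma DGegen_rec (lam : ℝ) (n : ℕ) (r : ℝ) :
    ((n:ℝ) + 2) * DGegen lam (n+2) r
      = 2 * ((n:ℝ) + 1 + lam) * (Gegen lam (n+1) r + r * DGegen lam (n+1) r)
        - ((n:ℝ) + 2*lam) * DGegen lam n r := by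
  have h : ((n:ℝ) + 2) ≠ 0 := by positivity
  rw [DGegen_add_two]
  field_simp
  ring

lemma hasDerivAt_Gegen (lam : ℝ) : ∀ (n : ℕ) (r : ℝ), HasDerivAt (Gegen lam n) (DGegen lam n r) r
  | 0, r => by
      have : Gegen lam 0 = fun _ : ℝ => (1:ℝ) := funext fun _ => rfl
      rw [this, DGegen_zero]
      exact hasDerivAt_const r 1
  | 1, r => by
      have : Gegen lam 1 = fun x : ℝ => 2 * lam * x := funext fun _ => rfl
      rw [this, DGegen_one]
      simpa using (hasDerivAt_id r).const_mul (2*lam)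
  | (n+2), r => by
      have h1 := hasDerivAt_Gegen lam (n+1) r
      have h0 := hasDerivAt_Gegen lam n r
      have hfun : Gegen lam (n+2) = fun x : ℝ =>
          2 * ((n : ℝ) + 2 + lam - 1) / ((n : ℝ) + 2) * x * Gegen lam (n + 1) x
            - ((n : ℝ) + 2 + 2 * lam - 2) / ((n : ℝ) + 2) * Gegen lam n x := funext fun _ => rfl
      rw [hfun]
      have key := (((hasDerivAt_id r).mul h1).const_mul
          (2 * ((n : ℝ) + 2 + lam - 1) / ((n : ℝ) + 2))).sub
          (h0.const_mul (((n : ℝ) + 2 + 2 * lam - 2) / ((n : ℝ) + 2)))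
      convert key using 1
      · rfl
      · rfl
      · funext x; simp only [Pi.sub_apply, Pi.mul_apply, id_eq]; ring
      · rw [DGegen_add_two]; simp only [id_eq]; ring

@[fun_prop]
lemma continuous_Gegen (lam : ℝ) (n : ℕ) : Continuous (Gegen lam n) := by
  have h : Differentiable ℝ (Gegen lam n) := fun x => (hasDerivAt_Gegen lam n x).differentiableAt
  exact h.continuous

@[fun_prop]
lemma continuous_DGegen (lam : ℝ) : ∀ n : ℕ, Continuous (DGegen lam n)
  | 0 => continuous_const
  | 1 => continuous_const
  | (n+2) => by
      have h1 := continuous_DGegen lam (n+1)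
      have h0 := continuous_DGegen lam n
      have hfun : DGegen lam (n+2) = fun x : ℝ =>
          2 * ((n : ℝ) + 2 + lam - 1) / ((n : ℝ) + 2) * (Gegen lam (n + 1) x + x * DGegen lam (n + 1) x)
            - ((n : ℝ) + 2 + 2 * lam - 2) / ((n : ℝ) + 2) * DGegen lam n x := funext fun _ => rfl
      rw [hfun]
      exact (continuous_const.mul ((continuous_Gegen lam (n+1)).add (continuous_id.mul h1))).sub
        (continuous_const.mul h0)

lemma Gegen_neg (lam : ℝ) : ∀ (n : ℕ) (r : ℝ), Gegen lam n (-r) = (-1)^n * Gegen lam n r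
  | 0, r => by simp
  | 1, r => by simp only [Gegen_one, pow_one]; ring
  | (n+2), r => by
      rw [Gegen_add_two, Gegen_add_two, Gegen_neg lam (n+1) r, Gegen_neg lam n r]
      ring

/-- the key derivative identity (D) -/
lemma gegen_D (lam : ℝ) : ∀ (n : ℕ) (r : ℝ), (1 - r^2) * DGegen lam (n+1) r
    = ((n:ℝ) + 2*lam) * Gegen lam n r - ((n:ℝ) + 1) * r * Gegen lam (n+1) r
  | 0, r => by simp; ring
  | 1, r => by
      have hD2 := DGegen_rec lam 0 r
      have hG2 := Gegen_rec lam 0 r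
      norm_num [DGegen_one, DGegen_zero, Gegen_one, Gegen_zero] at hD2 hG2 ⊢
      -- cast
      linear_combination ((1-r^2)/2) * hD2 + r * hG2
  | (n+2), r => by
      have h1 := gegen_D lam (n+1) r
      have h0 := gegen_D lam n r
      have hD3 := DGegen_rec lam (n+1) r
      have hG3 := Gegen_rec lam (n+1) r
      have hrec := Gegen_rec lam n r
      push_cast at hD3 hG3 hrec h1 h0 ⊢
      have h3 : ((n:ℝ) + 3) ≠ 0 := by positivity
      apply mul_left_cancel₀ h3
      linear_combination (1-r^2) * hD3 + ((n:ℝ)+3)*r*hG3 + 2*((n:ℝ)+2+lam)*r*h1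
        - ((n:ℝ)+1+2*lam)*h0 - ((n:ℝ)+1+2*lam)*hrec

/-- FTC: derivative of sin^(b+2) * q(cos) integrates to zero over [0,π]. -/
lemma ftc_zero (b : ℕ) (q dq : ℝ → ℝ) (hq : ∀ x, HasDerivAt q (dq x) x) (hdq : Continuous dq) :
    ∫ θ in (0:ℝ)..π, ((((b:ℝ)+2) * cos θ * q (cos θ) - (1 - cos θ^2) * dq (cos θ)) * sin θ ^ (b+1)) = 0 := by
  have hqc : Continuous q := by
    have h : Differentiable ℝ q := fun x => (hq x).differentiableAt
    exact h.continuous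
  have hF : ∀ θ ∈ Set.uIcc (0:ℝ) π, HasDerivAt (fun t => sin t ^ (b+2) * q (cos t))
      (((((b:ℝ)+2) * cos θ * q (cos θ) - (1 - cos θ^2) * dq (cos θ)) * sin θ ^ (b+1))) θ := by
    intro θ _
    have h1 : HasDerivAt (fun t : ℝ => sin t ^ (b+2)) ((((b:ℝ)+2)) * sin θ ^ (b+1) * cos θ) θ := by
      have h := (Real.hasDerivAt_sin θ).fun_pow (b+2)
      simpa using h
    have h2 : HasDerivAt (fun t : ℝ => q (cos t)) (dq (cos θ) * (-sin θ)) θ :=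
      (hq (cos θ)).comp θ (Real.hasDerivAt_cos θ)
    have h3 := h1.mul h2
    have hs : (1:ℝ) - cos θ^2 = sin θ^2 := (Real.sin_sq θ).symm
    exact h3.congr_deriv (by rw [hs]; ring)
  have hInt : IntervalIntegrable (fun θ => ((((b:ℝ)+2) * cos θ * q (cos θ) - (1 - cos θ^2) * dq (cos θ)) * sin θ ^ (b+1))) volume 0 π :=
    by apply Continuous.intervalIntegrable; fun_prop
  rw [integral_eq_sub_of_hasDerivAt hF hInt]
  simp [Real.sin_pi]

/-- contiguous relation (A) -/
lemma gegen_A (lam : ℝ) (hlam : 0 < lam) : ∀ (n : ℕ) (r : ℝ),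
    ((n:ℝ)+2+lam) * Gegen lam (n+2) r = lam * (Gegen (lam+1) (n+2) r - Gegen (lam+1) n r)
  | 0, r => by
      have hG2 := Gegen_rec lam 0 r
      have hH2 := Gegen_rec (lam+1) 0 r
      norm_num [Gegen_one, Gegen_zero] at hG2 hH2 ⊢
      linear_combination ((2+lam)/2) * hG2 - (lam/2) * hH2
  | 1, r => by
      have hG3 := Gegen_rec lam 1 r
      have hH3 := Gegen_rec (lam+1) 1 r
      have hA0 := gegen_A lam hlam 0 r
      norm_num [Gegen_one, Gegen_zero] at hG3 hH3 hA0 ⊢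
      linear_combination ((3+lam)/3) * hG3 - (lam/3) * hH3 + (2*r*(3+lam)/3) * hA0
  | (n+2), r => by
      have hA1 := gegen_A lam hlam (n+1) r
      have hA0 := gegen_A lam hlam n r
      have hG4 := Gegen_rec lam (n+2) r
      have hH4 := Gegen_rec (lam+1) (n+2) r
      have hH2 := Gegen_rec (lam+1) n r
      push_cast at hA1 hA0 hG4 hH4 hH2 ⊢
      have hpos : (((n:ℝ)+4)*((n:ℝ)+2+lam)) ≠ 0 := by positivity
      apply mul_left_cancel₀ hpos
      linear_combination (((n:ℝ)+4+lam)*((n:ℝ)+2+lam)) * hG4 - (lam*((n:ℝ)+2+lam)) * hH4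
        + (2*r*((n:ℝ)+4+lam)*((n:ℝ)+2+lam)) * hA1 - (((n:ℝ)+2+2*lam)*((n:ℝ)+4+lam)) * hA0
        + (lam*((n:ℝ)+4+lam)) * hH2

/-- identity (P): antiderivative identity for the weighted Gegenbauer function -/
lemma gegen_P (lam : ℝ) (hlam : 0 < lam) : ∀ (j : ℕ) (r : ℝ),
    2*lam*((2*lam+1)*r*Gegen (lam+1) j r - (1-r^2)*DGegen (lam+1) j r)
      = ((j:ℝ)+1)*((j:ℝ)+1+2*lam)*Gegen lam (j+1) r
  | 0, r => by simp; ring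
  | (k+1), r => by
      have hD := gegen_D (lam+1) k r
      have hRec := Gegen_rec (lam+1) k r
      have hA := gegen_A lam hlam k r
      push_cast at hD hRec hA ⊢
      have hpos : ((k:ℝ)+2+lam) ≠ 0 := by positivity
      apply mul_left_cancel₀ hpos
      linear_combination (-(2*lam*((k:ℝ)+2+lam))) * hD - (lam*((k:ℝ)+2+2*lam)) * hRec
        - (((k:ℝ)+2)*((k:ℝ)+2+2*lam)) * hA

/-! ## Integral layer -/

def lamm (m : ℕ) : ℝ := ((m:ℝ)+1)/2

lemma lamm_pos (m : ℕ) : 0 < lamm m := by rw [lamm]; positivity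

def Wp (n : ℕ) : ℝ := ∫ θ in (0:ℝ)..π, sin θ ^ n
def NI (m n : ℕ) : ℝ := ∫ θ in (0:ℝ)..π, Gegen (lamm m) n (cos θ)^2 * sin θ^(m+1)
def XI (m n : ℕ) : ℝ := ∫ θ in (0:ℝ)..π, cos θ * Gegen (lamm m) (n+1) (cos θ) * Gegen (lamm m) n (cos θ) * sin θ^(m+1)
def YI (m n : ℕ) : ℝ := ∫ θ in (0:ℝ)..π, Gegen (lamm m) (n+2) (cos θ) * Gegen (lamm m) n (cos θ) * sin θ^(m+1)
def TIc (m n : ℕ) : ℝ := ∫ θ in (0:ℝ)..π, Gegen (lamm m + 1) n (cos θ) * sin θ^(m+2)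
def XTc (m n : ℕ) : ℝ := ∫ θ in (0:ℝ)..π, cos θ * Gegen (lamm m + 1) (n+1) (cos θ) * sin θ^(m+2)
def ZI (m n : ℕ) : ℝ := ∫ θ in (0:ℝ)..π, Gegen (lamm m) n (cos θ) * sin θ^(m+1)
def JI (m n : ℕ) : ℝ := ∫ θ in (0:ℝ)..π, θ * (Gegen (lamm m) n (cos θ) * sin θ^(m+1))

lemma alphaI (m k : ℕ) :
    ((k:ℝ)+2) * NI m (k+2)
      = 2*((k:ℝ)+1+lamm m) * XI m (k+1) - ((k:ℝ)+2*lamm m) * YI m k := by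
  rw [NI, XI, YI, ← intervalIntegral.integral_const_mul, ← intervalIntegral.integral_const_mul, ← intervalIntegral.integral_const_mul,
    ← intervalIntegral.integral_sub (by apply Continuous.intervalIntegrable; fun_prop)
      (by apply Continuous.intervalIntegrable; fun_prop)]
  apply integral_congr
  intro θ _
  simp only
  linear_combination (Gegen (lamm m) (k+2) (cos θ) * sin θ^(m+1)) * Gegen_rec (lamm m) k (cos θ)

lemma gammaI (m k : ℕ) :
    ((k:ℝ)+2) * YI m k
      = 2*((k:ℝ)+1+lamm m) * XI m k - ((k:ℝ)+2*lamm m) * NI m k := by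
  rw [NI, XI, YI, ← intervalIntegral.integral_const_mul, ← intervalIntegral.integral_const_mul, ← intervalIntegral.integral_const_mul,
    ← intervalIntegral.integral_sub (by apply Continuous.intervalIntegrable; fun_prop)
      (by apply Continuous.intervalIntegrable; fun_prop)]
  apply integral_congr
  intro θ _
  simp only
  linear_combination (Gegen (lamm m) k (cos θ) * sin θ^(m+1)) * Gegen_rec (lamm m) k (cos θ)

lemma betaI (m k : ℕ) :
    (2*(k:ℝ)+2*lamm m+4) * XI m (k+1)
      = ((k:ℝ)+1+2*lamm m) * NI m (k+1) + ((k:ℝ)+2*lamm m) * YI m k := by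
  set L := lamm m with hLdef
  have hq : ∀ x, HasDerivAt (fun y => Gegen L (k+2) y * Gegen L (k+1) y)
      (DGegen L (k+2) x * Gegen L (k+1) x + Gegen L (k+2) x * DGegen L (k+1) x) x :=
    fun x => (hasDerivAt_Gegen L (k+2) x).mul (hasDerivAt_Gegen L (k+1) x)
  have h0 := ftc_zero m _ _ hq (by fun_prop)
  have key : (2*(k:ℝ)+2*L+4) * XI m (k+1) - (((k:ℝ)+1+2*L) * NI m (k+1) + ((k:ℝ)+2*L) * YI m k)
      = ∫ θ in (0:ℝ)..π, ((((m:ℝ)+2) * cos θ * ((fun y => Gegen L (k+2) y * Gegen L (k+1) y) (cos θ))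
          - (1 - cos θ^2) * ((fun x => DGegen L (k+2) x * Gegen L (k+1) x + Gegen L (k+2) x * DGegen L (k+1) x) (cos θ))) * sin θ ^ (m+1)) := by
    rw [XI, NI, YI, ← intervalIntegral.integral_const_mul, ← intervalIntegral.integral_const_mul, ← intervalIntegral.integral_const_mul,
      ← intervalIntegral.integral_add (by apply Continuous.intervalIntegrable; fun_prop)
        (by apply Continuous.intervalIntegrable; fun_prop),
      ← intervalIntegral.integral_sub (by apply Continuous.intervalIntegrable; fun_prop)
        (by apply Continuous.intervalIntegrable; fun_prop)]
    apply integral_congr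
    intro θ _
    simp only
    have hD2 := gegen_D L (k+1) (cos θ)
    have hD1 := gegen_D L k (cos θ)
    have hm : (m:ℝ)+2 = 2*L+1 := by rw [hLdef, lamm]; ring
    push_cast at hD2 hD1 ⊢
    linear_combination (Gegen L (k+1) (cos θ) * sin θ^(m+1)) * hD2
      + (Gegen L (k+2) (cos θ) * sin θ^(m+1)) * hD1
      - (cos θ * Gegen L (k+2) (cos θ) * Gegen L (k+1) (cos θ) * sin θ^(m+1)) * hm
  rw [h0] at key
  linarith [key]

lemma XTrel (m k : ℕ) :
    ((k:ℝ)+(m:ℝ)+4) * XTc m k = ((k:ℝ)+(m:ℝ)+3) * TIc m k := by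
  set L := lamm m with hLdef
  have hq : ∀ x, HasDerivAt (Gegen (L+1) (k+1)) (DGegen (L+1) (k+1) x) x :=
    fun x => hasDerivAt_Gegen (L+1) (k+1) x
  have h0 := ftc_zero (m+1) _ _ hq (by fun_prop)
  have key : ((k:ℝ)+(m:ℝ)+4) * XTc m k - ((k:ℝ)+(m:ℝ)+3) * TIc m k
      = ∫ θ in (0:ℝ)..π, (((((m:ℕ):ℝ)+1+2) * cos θ * (Gegen (L+1) (k+1) (cos θ))
          - (1 - cos θ^2) * (DGegen (L+1) (k+1) (cos θ))) * sin θ ^ (m+1+1)) := by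
    rw [XTc, TIc, ← intervalIntegral.integral_const_mul, ← intervalIntegral.integral_const_mul,
      ← intervalIntegral.integral_sub (by apply Continuous.intervalIntegrable; fun_prop)
        (by apply Continuous.intervalIntegrable; fun_prop)]
    apply integral_congr
    intro θ _
    simp only
    have hD := gegen_D (L+1) k (cos θ)
    have hm : 2*(L+1) = (m:ℝ)+3 := by rw [hLdef, lamm]; ring
    push_cast at hD ⊢
    linear_combination (sin θ^(m+2)) * hD + (Gegen (L+1) k (cos θ) * sin θ^(m+2)) * hm
  have h0' : (∫ θ in (0:ℝ)..π, (((((m:ℕ):ℝ)+1+2) * cos θ * (Gegen (L+1) (k+1) (cos θ))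
      - (1 - cos θ^2) * (DGegen (L+1) (k+1) (cos θ))) * sin θ ^ (m+1+1))) = 0 := by
    have := h0
    push_cast at this ⊢
    convert this using 2
  rw [h0'] at key
  linarith [key]

lemma TrecI (m k : ℕ) :
    ((k:ℝ)+2) * TIc m (k+2)
      = 2*((k:ℝ)+1+(lamm m+1)) * XTc m k - ((k:ℝ)+2*(lamm m+1)) * TIc m k := by
  rw [TIc, XTc, TIc, ← intervalIntegral.integral_const_mul, ← intervalIntegral.integral_const_mul, ← intervalIntegral.integral_const_mul,
    ← intervalIntegral.integral_sub (by apply Continuous.intervalIntegrable; fun_prop)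
      (by apply Continuous.intervalIntegrable; fun_prop)]
  apply integral_congr
  intro θ _
  simp only
  linear_combination (sin θ^(m+2)) * Gegen_rec (lamm m + 1) k (cos θ)

lemma hasDerivAt_weight (b : ℕ) (q dq : ℝ → ℝ) (hq : ∀ x, HasDerivAt q (dq x) x) (θ : ℝ) :
    HasDerivAt (fun t => sin t ^ (b+2) * q (cos t))
      ((((b:ℝ)+2) * cos θ * q (cos θ) - (1 - cos θ^2) * dq (cos θ)) * sin θ ^ (b+1)) θ := by
  have h1 : HasDerivAt (fun t : ℝ => sin t ^ (b+2)) ((((b:ℝ)+2)) * sin θ ^ (b+1) * cos θ) θ := by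
    have h := (Real.hasDerivAt_sin θ).fun_pow (b+2)
    simpa using h
  have h2 : HasDerivAt (fun t : ℝ => q (cos t)) (dq (cos θ) * (-sin θ)) θ :=
    (hq (cos θ)).comp θ (Real.hasDerivAt_cos θ)
  have h3 := h1.mul h2
  have hs : (1:ℝ) - cos θ^2 = sin θ^2 := (Real.sin_sq θ).symm
  exact h3.congr_deriv (by rw [hs]; ring)

lemma TIc_zero (m : ℕ) : TIc m 0 = Wp (m+2) := by
  rw [TIc, Wp]
  apply integral_congr
  intro θ _
  simp

lemma NI_one (m : ℕ) : NI m 1 = ((m:ℝ)+1)^2 * (Wp (m+1) - Wp (m+3)) := by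
  rw [NI, Wp, Wp, ← intervalIntegral.integral_sub (by apply Continuous.intervalIntegrable; fun_prop)
    (by apply Continuous.intervalIntegrable; fun_prop), ← intervalIntegral.integral_const_mul]
  apply integral_congr
  intro θ _
  simp only [Gegen_one]
  have hc : cos θ^2 = 1 - sin θ^2 := Real.cos_sq' θ
  have hm : 2*lamm m = (m:ℝ)+1 := by rw [lamm]; ring
  linear_combination ((2*lamm m+((m:ℝ)+1))*cos θ^2*sin θ^(m+1))*hm + (((m:ℝ)+1)^2*sin θ^(m+1))*hc

lemma ZI_odd (m k : ℕ) : ZI m (2*k+1) = 0 := by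
  set f : ℝ → ℝ := fun θ => Gegen (lamm m) (2*k+1) (cos θ) * sin θ^(m+1) with hf
  have key : ∫ θ in (0:ℝ)..π, f (π - θ) = ∫ θ in (0:ℝ)..π, f θ := by
    have h := intervalIntegral.integral_comp_sub_left (a := (0:ℝ)) (b := π) f π
    simpa using h
  have h2 : ∀ θ, f (π - θ) = - f θ := by
    intro θ
    simp only [hf]
    rw [Real.cos_pi_sub, Real.sin_pi_sub, Gegen_neg, Odd.neg_one_pow ⟨k, by ring⟩]
    ring
  rw [intervalIntegral.integral_congr (g := fun θ => -(f θ)) (fun θ _ => h2 θ),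
    intervalIntegral.integral_neg] at key
  have h3 : ZI m (2*k+1) = ∫ θ in (0:ℝ)..π, f θ := rfl
  rw [h3]
  linarith [key]

lemma JI_eq (m j : ℕ) :
    ((j:ℝ)+1) * ((j:ℝ)+(m:ℝ)+2) * JI m (j+1) = -(((m:ℝ)+1) * TIc m j) := by
  set L := lamm m with hLdef
  have hq : ∀ x, HasDerivAt (Gegen (L+1) j) (DGegen (L+1) j x) x := fun x => hasDerivAt_Gegen _ _ x
  set v' : ℝ → ℝ := fun θ => ((((m:ℕ):ℝ)+2) * cos θ * Gegen (L+1) j (cos θ)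
      - (1 - cos θ^2) * DGegen (L+1) j (cos θ)) * sin θ ^ (m+1) with hv'def
  have hv : ∀ θ ∈ Set.uIcc (0:ℝ) π, HasDerivAt (fun t => sin t ^ (m+2) * Gegen (L+1) j (cos t)) (v' θ) θ :=
    fun θ _ => hasDerivAt_weight m _ _ hq θ
  have hparts := intervalIntegral.integral_mul_deriv_eq_deriv_mul (a := (0:ℝ)) (b := π)
      (u := fun θ : ℝ => θ) (u' := fun _ => (1:ℝ))
      (fun θ _ => hasDerivAt_id θ) hv
      (intervalIntegrable_const) (by apply Continuous.intervalIntegrable; fun_prop)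
  have hb1 : sin π ^ (m+2) * Gegen (L+1) j (cos π) = 0 := by
    simp [Real.sin_pi]
  have hb0 : sin (0:ℝ) ^ (m+2) * Gegen (L+1) j (cos 0) = 0 := by
    simp
  rw [hb1, hb0] at hparts
  -- hparts : ∫ θ * v' θ = π * 0 - 0 * 0 - ∫ 1 * (sin θ^(m+2) * H (cos θ))
  have hTv : (∫ θ in (0:ℝ)..π, (1:ℝ) * (sin θ ^ (m+2) * Gegen (L+1) j (cos θ))) = TIc m j := by
    rw [TIc]
    apply integral_congr
    intro θ _
    ring
  rw [hTv] at hparts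
  have key : ((j:ℝ)+1) * ((j:ℝ)+(m:ℝ)+2) * JI m (j+1) = ((m:ℝ)+1) * ∫ θ in (0:ℝ)..π, θ * v' θ := by
    rw [JI, ← intervalIntegral.integral_const_mul, ← intervalIntegral.integral_const_mul]
    apply integral_congr
    intro θ _
    simp only [hv'def]
    have hP := gegen_P L (lamm_pos m) j (cos θ)
    have hm : 2*L = (m:ℝ)+1 := by rw [hLdef, lamm]; ring
    rw [hm] at hP
    push_cast at hP ⊢
    linear_combination (-(θ * sin θ^(m+1))) * hP
  rw [key, hparts]
  ring

lemma Wp_succ_succ (n : ℕ) : Wp (n+2) = ((n:ℝ)+1)/((n:ℝ)+2) * Wp n := by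
  rw [Wp, Wp, integral_sin_pow]
  simp [Real.sin_pi]

lemma Wp_pos (n : ℕ) : 0 < Wp n := integral_sin_pow_pos n

lemma Wp_gamma : ∀ n : ℕ, Wp n = Real.sqrt π * Real.Gamma (((n:ℝ)+1)/2) / Real.Gamma ((n:ℝ)/2+1)
  | 0 => by
      have h0 : Wp 0 = π := by
        rw [Wp]
        simp
      rw [h0]
      norm_num [Real.Gamma_one]
      rw [Real.Gamma_one_half_eq]
      exact (Real.mul_self_sqrt Real.pi_pos.le).symm
  | 1 => by
      have h1 : Wp 1 = 2 := by
        rw [Wp]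
        norm_num [integral_sin]
      rw [h1]
      have h2 : Real.Gamma (((1:ℕ):ℝ)/2+1) = (1/2) * Real.Gamma (1/2) := by
        push_cast
        rw [show (1:ℝ)/2+1 = 1/2+1 by norm_num, Real.Gamma_add_one (by norm_num)]
      rw [h2, Real.Gamma_one_half_eq]
      push_cast
      rw [show ((1:ℝ)+1)/2 = 1 by norm_num, Real.Gamma_one]
      have hs : Real.sqrt π ≠ 0 := by positivity
      field_simp
  | (n+2) => by
      rw [Wp_succ_succ, Wp_gamma n]
      have hG1 : (0:ℝ) < Real.Gamma (((n:ℝ)+1)/2) := Real.Gamma_pos_of_pos (by positivity)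
      have hG2 : (0:ℝ) < Real.Gamma ((n:ℝ)/2+1) := Real.Gamma_pos_of_pos (by positivity)
      have h1 : Real.Gamma ((((n:ℕ):ℝ)+2+1)/2) = (((n:ℝ)+1)/2) * Real.Gamma (((n:ℝ)+1)/2) := by
        rw [show (((n:ℕ):ℝ)+2+1)/2 = ((n:ℝ)+1)/2 + 1 by push_cast; ring,
          Real.Gamma_add_one (by positivity)]
      have h2 : Real.Gamma ((((n:ℕ):ℝ)+2)/2+1) = ((n:ℝ)/2+1) * Real.Gamma ((n:ℝ)/2+1) := by
        rw [show (((n:ℕ):ℝ)+2)/2+1 = ((n:ℝ)/2+1) + 1 by push_cast; ring,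
          Real.Gamma_add_one (by positivity)]
      push_cast
      push_cast at h1 h2
      rw [h1, h2]
      have hs : Real.sqrt π ≠ 0 := by positivity
      field_simp

lemma beta0I (m : ℕ) : ((m:ℝ)+3) * XI m 0 = ((m:ℝ)+1) * NI m 0 := by
  set L := lamm m with hLdef
  have hq : ∀ x, HasDerivAt (Gegen L 1) (DGegen L 1 x) x := fun x => hasDerivAt_Gegen _ _ x
  have h0 := ftc_zero m _ _ hq (by fun_prop)
  have key : ((m:ℝ)+3) * XI m 0 - ((m:ℝ)+1) * NI m 0
      = ∫ θ in (0:ℝ)..π, ((((m:ℝ)+2) * cos θ * (Gegen L 1 (cos θ))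
          - (1 - cos θ^2) * (DGegen L 1 (cos θ))) * sin θ ^ (m+1)) := by
    rw [XI, NI, ← intervalIntegral.integral_const_mul, ← intervalIntegral.integral_const_mul,
      ← intervalIntegral.integral_sub (by apply Continuous.intervalIntegrable; continuity)
        (by apply Continuous.intervalIntegrable; continuity)]
    apply integral_congr
    intro θ _
    norm_num [Gegen_one, Gegen_zero, DGegen_one]
    have hm : 2*L = (m:ℝ)+1 := by rw [hLdef, lamm]; ring
    linear_combination (sin θ^(m+1)) * hm
  rw [h0] at key
  linarith [key]

lemma YI_eq_zero (m : ℕ) : ∀ k, YI m k = 0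
  | 0 => by
      have hg := gammaI m 0
      have hb := beta0I m
      push_cast at hg
      simp only [lamm] at hg hb
      linear_combination (1/2)*hg + (1/2)*hb
  | (k+1) => by
      have h := YI_eq_zero m k
      have hg := gammaI m (k+1)
      have hb := betaI m k
      push_cast at hg hb
      simp only [lamm] at hg hb
      have h3 : ((k:ℝ)+3) ≠ 0 := by positivity
      apply mul_left_cancel₀ h3
      linear_combination hg + hb + ((k:ℝ)+(m:ℝ)+1)*h

lemma NrecI (m k : ℕ) :
    (2*(k:ℝ)+(m:ℝ)+5) * (((k:ℝ)+2) * NI m (k+2))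
      = ((2*(k:ℝ)+(m:ℝ)+3)*((k:ℝ)+(m:ℝ)+2)) * NI m (k+1) := by
  have ha := alphaI m k
  have hb := betaI m k
  have hY := YI_eq_zero m k
  simp only [lamm] at ha hb
  linear_combination (2*(k:ℝ)+(m:ℝ)+5)*ha + (2*(k:ℝ)+(m:ℝ)+3)*hb - (2*((k:ℝ)+(m:ℝ)+1))*hY

lemma TratI (m k : ℕ) :
    ((k:ℝ)+2)*((k:ℝ)+(m:ℝ)+4) * TIc m (k+2) = ((k:ℝ)+1)*((k:ℝ)+(m:ℝ)+3) * TIc m k := by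
  have h1 := TrecI m k
  have h2 := XTrel m k
  simp only [lamm] at h1 h2
  linear_combination ((k:ℝ)+(m:ℝ)+4)*h1 + (2*(k:ℝ)+(m:ℝ)+5)*h2

lemma NI_pos (m : ℕ) : ∀ n : ℕ, 0 < NI m (n+1)
  | 0 => by
      have h := NI_one m
      have hW := Wp_succ_succ (m+1)
      have hpos := Wp_pos (m+1)
      rw [show m+3 = m+1+2 by omega, hW] at h
      push_cast at h
      rw [h]
      have key : ((m:ℝ)+1+1)/((m:ℝ)+1+2) < 1 := by
        rw [div_lt_one (by positivity)]
        linarith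
      have h2 : 0 < Wp (m+1) - ((m:ℝ)+1+1)/((m:ℝ)+1+2)*Wp (m+1) := by nlinarith [hpos, key]
      exact mul_pos (by positivity) h2
  | (k+1) => by
      have h := NI_pos m k
      have hrec := NrecI m k
      have h2 : NI m (k+2) = ((2*(k:ℝ)+(m:ℝ)+3)*((k:ℝ)+(m:ℝ)+2)) * NI m (k+1)
          / ((2*(k:ℝ)+(m:ℝ)+5)*((k:ℝ)+2)) := by
        field_simp
        linear_combination hrec
      show 0 < NI m (k+2)
      rw [h2]
      exact div_pos (mul_pos (by positivity) h) (by positivity)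

lemma schoen_eq (m n : ℕ) :
    SchoenbergCoeff (m+2) (fun θ => 1 - 2*θ/π) n = (NI m n)⁻¹ * (ZI m n - 2/π * JI m n) := by
  rw [SchoenbergCoeff]
  have hc : ((↑(m+2):ℝ) - 1)/2 = lamm m := by push_cast [lamm]; ring
  have he : m+2-1 = m+1 := by omega
  have hNI : GegenNormSq (m+2) n = NI m n := by
    rw [GegenNormSq, hc, he]; rfl
  rw [hNI, hc, he]
  congr 1
  rw [ZI, JI, ← intervalIntegral.integral_const_mul,
      ← intervalIntegral.integral_sub (by apply Continuous.intervalIntegrable; fun_prop)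
        (by apply Continuous.intervalIntegrable; fun_prop)]
  apply integral_congr
  intro θ _
  simp only
  ring

set_option maxHeartbeats 1000000 in
lemma part_one (m : ℕ) :
    SchoenbergCoeff (m+2) (fun θ => 1 - 2 * θ / π) 1
      = Real.Gamma (((↑(m+2):ℝ) - 1) / 2) * Real.Gamma ((((↑(m+2):ℝ) - 1) / 2) + 2) /
          (π * Real.Gamma ((((↑(m+2):ℝ) - 1) / 2) + 3 / 2) ^ 2) := by
  have hπ : (0:ℝ) < π := Real.pi_pos
  rw [schoen_eq m 1]
  have hZ : ZI m 1 = 0 := by simpa using ZI_odd m 0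
  rw [hZ]
  have hJ := JI_eq m 0
  norm_num at hJ
  rw [TIc_zero] at hJ
  have hJv : JI m 1 = -(((m:ℝ)+1) * Wp (m+2))/((m:ℝ)+2) := by
    have hne : ((m:ℝ)+2) ≠ 0 := by positivity
    field_simp
    linear_combination hJ
  have hN := NI_one m
  have hW3 : Wp (m+3) = ((m:ℝ)+2)/((m:ℝ)+3) * Wp (m+1) := by
    have h := Wp_succ_succ (m+1)
    rw [show m+1+2 = m+3 by omega] at h
    push_cast at h
    rw [h]
    ring
  rw [hW3] at hN
  have hm3' : ((m:ℝ)+3) ≠ 0 := by positivity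
  have hNv : NI m 1 = ((m:ℝ)+1)^2 * Wp (m+1) / ((m:ℝ)+3) := by
    rw [hN]
    field_simp
    ring
  rw [hJv, hNv, Wp_gamma (m+1), Wp_gamma (m+2)]
  have hc : ((↑(m+2):ℝ) - 1)/2 = ((m:ℝ)+1)/2 := by push_cast; ring
  rw [hc]
  have e1 : ((↑(m+1):ℝ)+1)/2 = ((m:ℝ)+1)/2 + 1/2 := by push_cast; ring
  have e2 : ((↑(m+1):ℝ))/2+1 = ((m:ℝ)+1)/2 + 1 := by push_cast; ring
  have e4 : ((↑(m+2):ℝ)+1)/2 = ((m:ℝ)+1)/2 + 1 := by push_cast; ring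
  have e5 : ((↑(m+2):ℝ))/2+1 = ((m:ℝ)+1)/2 + 3/2 := by push_cast; ring
  rw [e1, e2, e4, e5]
  have hu : (0:ℝ) < ((m:ℝ)+1)/2 := by positivity
  have h2 : Real.Gamma (((m:ℝ)+1)/2+2) = ((((m:ℝ)+1)/2)+1)*((((m:ℝ)+1)/2) * Real.Gamma (((m:ℝ)+1)/2)) := by
    rw [show ((m:ℝ)+1)/2+2 = (((m:ℝ)+1)/2+1)+1 by ring, Real.Gamma_add_one (by positivity),
      Real.Gamma_add_one hu.ne']
  have h3 : Real.Gamma (((m:ℝ)+1)/2+3/2) = ((((m:ℝ)+1)/2)+1/2) * Real.Gamma (((m:ℝ)+1)/2+1/2) := by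
    rw [show ((m:ℝ)+1)/2+3/2 = (((m:ℝ)+1)/2+1/2)+1 by ring, Real.Gamma_add_one (by positivity)]
  have h1 : Real.Gamma (((m:ℝ)+1)/2+1) = (((m:ℝ)+1)/2) * Real.Gamma (((m:ℝ)+1)/2) := by
    rw [Real.Gamma_add_one hu.ne']
  rw [h2, h3, h1]
  have hGa : (0:ℝ) < Real.Gamma (((m:ℝ)+1)/2) := Real.Gamma_pos_of_pos hu
  have hGb : (0:ℝ) < Real.Gamma (((m:ℝ)+1)/2+1/2) := Real.Gamma_pos_of_pos (by positivity)
  have hs : (0:ℝ) < Real.sqrt π := Real.sqrt_pos.2 hπ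
  have hm2 : ((m:ℝ)+2) ≠ 0 := by positivity
  have hm3 : ((m:ℝ)+3) ≠ 0 := by positivity
  set gA := Real.Gamma (((m:ℝ)+1)/2) with hgA
  set gB := Real.Gamma (((m:ℝ)+1)/2+1/2) with hgB
  set sq := Real.sqrt π with hsq
  have hm1 : ((m:ℝ)+1) ≠ 0 := by positivity
  have hu2 : (((m:ℝ)+1)/2+1/2) ≠ 0 := by positivity
  have hu0 : (((m:ℝ)+1)/2) ≠ 0 := hu.ne'
  field_simp [hGa.ne', hGb.ne', hs.ne', hπ.ne', hm2, hm3]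
  ring


set_option maxHeartbeats 1000000 in
lemma scalar_key (a t mm jj : ℝ) (ha : 0 < a) (hm0 : 0 ≤ mm) (hj0 : 0 ≤ jj) :
    ((4*jj+mm+5)*(2*jj+mm+3)*((4*jj+mm+3)*(2*jj+mm+2)) /
        ((4*jj+mm+7)*(2*jj+3)*((4*jj+mm+5)*(2*jj+2))) * a)⁻¹ *
      (0 - 2/π * (-((mm+1) * ((2*jj+1)*(2*jj+mm+3)/((2*jj+2)*(2*jj+mm+4)) * t)) / ((2*jj+3)*(2*jj+mm+4))))
    = ((mm+1)/2 + 2*(jj+1) + 1) / ((mm+1)/2 + 2*(jj+1) - 1) *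
        (((jj+1) - 1/2)^2 / ((mm+1)/2 + (jj+1) + 1/2)^2) *
        (a⁻¹ * (0 - 2/π * (-((mm+1) * t) / ((2*jj+1)*(2*jj+mm+2))))) := by
  have c1 : ((mm+1)/2 + 2*(jj+1) - 1) ≠ 0 := by nlinarith
  have c2 : ((mm+1)/2 + (jj+1) + 1/2) ≠ 0 := by positivity
  have d1 : (2*jj+3) ≠ 0 := by positivity
  have d2 : (2*jj+mm+4) ≠ 0 := by positivity
  have d3 : (2*jj+2) ≠ 0 := by positivity
  have d4 : (2*jj+1) ≠ 0 := by positivity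
  have d5 : (2*jj+mm+2) ≠ 0 := by positivity
  have d6 : (4*jj+mm+7) ≠ 0 := by positivity
  have d7 : (4*jj+mm+5) ≠ 0 := by positivity
  have d8 : (4*jj+mm+3) ≠ 0 := by positivity
  have d9 : (2*jj+mm+3) ≠ 0 := by positivity
  field_simp
  rw [eq_div_iff (by
    have h : (0:ℝ) < mm + 1 + 2^2*(jj+1) - 2 := by nlinarith
    exact h.ne')]
  ring

set_option maxHeartbeats 1000000 in
lemma part_two (m j : ℕ) :
    SchoenbergCoeff (m+2) (fun θ => 1 - 2 * θ / π) (2*j+3)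
      = ((((↑(m+2):ℝ) - 1) / 2) + 2*((j:ℝ)+1) + 1) / ((((↑(m+2):ℝ) - 1) / 2) + 2*((j:ℝ)+1) - 1) *
          ((((j:ℝ)+1) - 1 / 2) ^ 2 / ((((↑(m+2):ℝ) - 1) / 2) + ((j:ℝ)+1) + 1 / 2) ^ 2) *
          SchoenbergCoeff (m+2) (fun θ => 1 - 2 * θ / π) (2*j+1) := by
  have hπ : (0:ℝ) < π := Real.pi_pos
  rw [schoen_eq m (2*j+3), schoen_eq m (2*j+1)]
  have hZ3 : ZI m (2*j+3) = 0 := by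
    have h := ZI_odd m (j+1)
    rw [show 2*(j+1)+1 = 2*j+3 by omega] at h
    exact h
  have hZ1 : ZI m (2*j+1) = 0 := ZI_odd m j
  rw [hZ3, hZ1]
  have hJ3 := JI_eq m (2*j+2)
  rw [show 2*j+2+1 = 2*j+3 by omega] at hJ3
  push_cast at hJ3
  have hJ1 := JI_eq m (2*j)
  push_cast at hJ1
  have hT := TratI m (2*j)
  push_cast at hT
  have hN1 := NrecI m (2*j+1)
  rw [show 2*j+1+2 = 2*j+3 by omega, show 2*j+1+1 = 2*j+2 by omega] at hN1
  push_cast at hN1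
  have hN0 := NrecI m (2*j)
  push_cast at hN0
  have hA : (0:ℝ) < NI m (2*j+1) := NI_pos m (2*j)
  have hprod : (((4*(j:ℝ)+(m:ℝ)+7)*(2*(j:ℝ)+3))*((4*(j:ℝ)+(m:ℝ)+5)*(2*(j:ℝ)+2))) * NI m (2*j+3)
      = (((4*(j:ℝ)+(m:ℝ)+5)*(2*(j:ℝ)+(m:ℝ)+3))*((4*(j:ℝ)+(m:ℝ)+3)*(2*(j:ℝ)+(m:ℝ)+2))) * NI m (2*j+1) := by
    linear_combination ((4*(j:ℝ)+(m:ℝ)+5)*(2*(j:ℝ)+2))*hN1 + ((4*(j:ℝ)+(m:ℝ)+5)*(2*(j:ℝ)+(m:ℝ)+3))*hN0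
  have hcN : NI m (2*j+3) = ((((4*(j:ℝ)+(m:ℝ)+5)*(2*(j:ℝ)+(m:ℝ)+3))*((4*(j:ℝ)+(m:ℝ)+3)*(2*(j:ℝ)+(m:ℝ)+2)))
      / (((4*(j:ℝ)+(m:ℝ)+7)*(2*(j:ℝ)+3))*((4*(j:ℝ)+(m:ℝ)+5)*(2*(j:ℝ)+2)))) * NI m (2*j+1) := by
    have hP : ((((4*(j:ℝ)+(m:ℝ)+7)*(2*(j:ℝ)+3))*((4*(j:ℝ)+(m:ℝ)+5)*(2*(j:ℝ)+2)))) ≠ 0 := by positivity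
    rw [div_mul_eq_mul_div, eq_div_iff hP]
    linear_combination hprod
  have hJ3v : JI m (2*j+3) = -(((m:ℝ)+1) * TIc m (2*j+2))/((2*(j:ℝ)+3)*(2*(j:ℝ)+(m:ℝ)+4)) := by
    have hne : ((2*(j:ℝ)+3)*(2*(j:ℝ)+(m:ℝ)+4)) ≠ 0 := by positivity
    field_simp
    linear_combination hJ3
  have hTv : TIc m (2*j+2) = (((2*(j:ℝ)+1)*(2*(j:ℝ)+(m:ℝ)+3))/((2*(j:ℝ)+2)*(2*(j:ℝ)+(m:ℝ)+4))) * TIc m (2*j) := by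
    have hne : ((2*(j:ℝ)+2)*(2*(j:ℝ)+(m:ℝ)+4)) ≠ 0 := by positivity
    field_simp
    linear_combination hT
  have hJ1v : JI m (2*j+1) = -(((m:ℝ)+1) * TIc m (2*j))/((2*(j:ℝ)+1)*(2*(j:ℝ)+(m:ℝ)+2)) := by
    have hne : ((2*(j:ℝ)+1)*(2*(j:ℝ)+(m:ℝ)+2)) ≠ 0 := by positivity
    field_simp
    linear_combination hJ1
  have hc : ((↑(m+2):ℝ) - 1)/2 = ((m:ℝ)+1)/2 := by push_cast; ring
  rw [hcN, hJ3v, hTv, hJ1v, hc]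
  exact scalar_key (NI m (2*j+1)) (TIc m (2*j)) (m:ℝ) (j:ℝ) hA (Nat.cast_nonneg m) (Nat.cast_nonneg j)

end Chents

open Chents in
/-- Induction formula for the Schoenberg coefficients of the Chentsov covariance. -/
theorem schoenberg_coeff_chentsov_induction
    (d : ℕ) (hd : 2 ≤ d) :
    SchoenbergCoeff d (fun θ => 1 - 2 * θ / π) 1
      = Real.Gamma (((d : ℝ) - 1) / 2) * Real.Gamma ((((d : ℝ) - 1) / 2) + 2) /
          (π * Real.Gamma ((((d : ℝ) - 1) / 2) + 3 / 2) ^ 2) ∧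
    ∀ n : ℕ, 1 ≤ n →
      SchoenbergCoeff d (fun θ => 1 - 2 * θ / π) (2 * n + 1)
        = ((((d : ℝ) - 1) / 2) + 2 * n + 1) / ((((d : ℝ) - 1) / 2) + 2 * n - 1) *
            (((n : ℝ) - 1 / 2) ^ 2 / ((((d : ℝ) - 1) / 2) + n + 1 / 2) ^ 2) *
            SchoenbergCoeff d (fun θ => 1 - 2 * θ / π) (2 * n - 1) := by
  obtain ⟨m, rfl⟩ : ∃ m, d = m + 2 := ⟨d - 2, by omega⟩
  constructor
  · exact part_one m
  · intro n hn
    obtain ⟨j, rfl⟩ : ∃ j, n = j + 1 := ⟨n - 1, by omega⟩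
    have h := part_two m j
    rw [show 2*(j+1)+1 = 2*j+3 from by omega, show 2*(j+1)-1 = 2*j+1 from by omega]
    push_cast at h ⊢
    exact h
end
end

section
/- Let ν > 0 and suppose (α_k)_{k∈ℕ} is a sequence of reals such that the power series ∑_{k=0}^∞ α_k t^k converges to exp(−ν · arccos t) for all t ∈ (−1,1). Then α₀ = exp(−νπ/2), α₁ = ν · exp(−νπ/2), and α_{k+2} = α_k · (k² + ν²)/((k+1)(k+2)) for every k ∈ ℕ. -/
open Real Filter FormalMultilinearSeries

lemma my_onBall (β : ℕ → ℝ) (f : ℝ → ℝ)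
    (h : ∀ t ∈ Set.Ioo (-1 : ℝ) 1, HasSum (fun k : ℕ => β k * t ^ k) (f t)) :
    HasFPowerSeriesOnBall f (ofScalars ℝ β) 0 1 := by
  constructor
  · apply ENNReal.le_of_forall_nnreal_lt
    intro r hr
    have hr1 : (r : ℝ) < 1 := by exact_mod_cast hr
    have hmem : (r : ℝ) ∈ Set.Ioo (-1 : ℝ) 1 := ⟨lt_of_lt_of_le (by norm_num) r.coe_nonneg, hr1⟩
    have hs := (h r hmem).summable.tendsto_atTop_zero
    apply FormalMultilinearSeries.le_radius_of_tendsto (l := 0)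
    have : ∀ n : ℕ, ‖ofScalars ℝ β n‖ * (r : ℝ) ^ n = |β n * (r:ℝ) ^ n| := by
      intro n
      rw [FormalMultilinearSeries.ofScalars_norm, abs_mul, abs_pow,
        abs_of_nonneg r.coe_nonneg]
      rfl
    simp only [this]
    simpa using hs.abs
  · norm_num
  · intro y hy
    have hy' : ‖y‖ < 1 := by
      simpa [enorm_eq_nnnorm, ENNReal.coe_lt_one_iff, ← NNReal.coe_lt_one, coe_nnnorm] using hy
    have hmem : y ∈ Set.Ioo (-1 : ℝ) 1 := abs_lt.mp (by simpa using hy')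
    simp only [zero_add, FormalMultilinearSeries.ofScalars_apply_eq, smul_eq_mul]
    exact h y hmem

lemma my_step (β : ℕ → ℝ) (f : ℝ → ℝ)
    (h : ∀ t ∈ Set.Ioo (-1 : ℝ) 1, HasSum (fun k : ℕ => β k * t ^ k) (f t)) :
    ∀ t ∈ Set.Ioo (-1 : ℝ) 1,
      HasSum (fun k : ℕ => ((k : ℝ) + 1) * β (k + 1) * t ^ k) (deriv f t) := by
  intro t ht
  have hp := (my_onBall β f h).fderiv
  have htb : t ∈ Metric.eball (0 : ℝ) 1 := by
    rw [EMetric.mem_ball, edist_zero_right]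
    simpa [enorm_eq_nnnorm, ← NNReal.coe_lt_one, coe_nnnorm, abs_lt] using ht
  have hs := hp.hasSum htb
  have hs2 := (ContinuousLinearMap.apply ℝ ℝ (1 : ℝ)).hasSum hs
  simp only [zero_add, ContinuousLinearMap.apply_apply] at hs2
  have hterm : ∀ n : ℕ, (ofScalars ℝ β).derivSeries n (fun _ => t) 1
      = ((n : ℝ) + 1) * β (n + 1) * t ^ n := by
    intro n
    have h1 : ((ofScalars ℝ β).derivSeries n fun _ => t)
        = t ^ n • ((ofScalars ℝ β).derivSeries n fun _ => (1:ℝ)) := by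
      have := ((ofScalars ℝ β).derivSeries n).map_smul_univ (fun _ : Fin n => t) (fun _ => (1:ℝ))
      simpa using this
    rw [h1, ContinuousLinearMap.smul_apply, smul_eq_mul,
      FormalMultilinearSeries.derivSeries_apply_diag,
      FormalMultilinearSeries.ofScalars_apply_eq]
    push_cast [smul_eq_mul]
    ring
  rw [fderiv_apply_one_eq_deriv] at hs2
  simpa only [hterm] using hs2

lemma my_zero (c : ℕ → ℝ)
    (h : ∀ t ∈ Set.Ioo (-1 : ℝ) 1, HasSum (fun k : ℕ => c k * t ^ k) 0) :
    ∀ k, c k = 0 := by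
  have hp : HasFPowerSeriesAt (0 : ℝ → ℝ) (ofScalars ℝ c) 0 :=
    ⟨1, my_onBall c (fun _ => 0) h⟩
  have := hp.eq_zero
  intro k
  have h2 := congrFun this k
  rwa [FormalMultilinearSeries.zero_apply, FormalMultilinearSeries.ofScalars_eq_zero] at h2

lemma my_g1 (ν : ℝ) : ∀ t ∈ Set.Ioo (-1 : ℝ) 1,
    HasDerivAt (fun u => Real.exp (-ν * Real.arccos u))
      (ν / Real.sqrt (1 - t ^ 2) * Real.exp (-ν * Real.arccos t)) t := by
  intro t ht
  have ha := Real.hasDerivAt_arccos ht.1.ne' ht.2.ne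
  have hin := ha.const_mul (-ν)
  have := (Real.hasDerivAt_exp (-ν * Real.arccos t)).comp t hin
  refine this.congr_deriv ?_
  ring

lemma my_g2 (ν : ℝ) : ∀ t ∈ Set.Ioo (-1 : ℝ) 1,
    HasDerivAt (deriv (fun u => Real.exp (-ν * Real.arccos u)))
      ((ν ^ 2 * Real.exp (-ν * Real.arccos t)
        + t * deriv (fun u => Real.exp (-ν * Real.arccos u)) t) / (1 - t ^ 2)) t := by
  set g : ℝ → ℝ := fun u => Real.exp (-ν * Real.arccos u) with hg
  intro t ht
  have h1t : (0:ℝ) < 1 - t ^ 2 := by nlinarith [ht.1, ht.2]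
  have hs : (0:ℝ) < Real.sqrt (1 - t ^ 2) := Real.sqrt_pos.mpr h1t
  have hsq : Real.sqrt (1 - t ^ 2) ^ 2 = 1 - t ^ 2 := Real.sq_sqrt h1t.le
  -- derivative of sqrt (1 - u^2)
  have hinner : HasDerivAt (fun u : ℝ => 1 - u ^ 2) (-(2 * t)) t := by
    simpa using ((hasDerivAt_pow 2 t).const_sub 1)
  have hsqrt : HasDerivAt (fun u : ℝ => Real.sqrt (1 - u ^ 2))
      (-t / Real.sqrt (1 - t ^ 2)) t := by
    have := (Real.hasDerivAt_sqrt h1t.ne').comp t hinner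
    refine this.congr_deriv ?_
    field_simp
  have hcube : Real.sqrt (1 - t ^ 2) ^ 3 = (1 - t ^ 2) * Real.sqrt (1 - t ^ 2) := by
    rw [show Real.sqrt (1 - t ^ 2) ^ 3 = Real.sqrt (1 - t ^ 2) ^ 2 * Real.sqrt (1 - t ^ 2) by ring,
      hsq]
  have hdiv : HasDerivAt (fun u : ℝ => ν / Real.sqrt (1 - u ^ 2))
      (ν * t / Real.sqrt (1 - t ^ 2) ^ 3) t := by
    have := (hasDerivAt_const t ν).div hsqrt hs.ne'
    refine this.congr_deriv ?_
    rw [hcube]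
    field_simp
    rw [hsq]
    ring
  have hmul := hdiv.mul (my_g1 ν t ht)
  have heq : deriv g =ᶠ[nhds t] fun u => ν / Real.sqrt (1 - u ^ 2) * g u := by
    filter_upwards [isOpen_Ioo.mem_nhds ht] with u hu
    exact (my_g1 ν u hu).deriv
  have hfin := hmul.congr_of_eventuallyEq heq
  have hderiv : deriv g t = ν / Real.sqrt (1 - t ^ 2) * g t := (my_g1 ν t ht).deriv
  have hval : (ν ^ 2 * g t + t * deriv g t) / (1 - t ^ 2)
      = ν * t / Real.sqrt (1 - t ^ 2) ^ 3 * g t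
        + ν / Real.sqrt (1 - t ^ 2) * (ν / Real.sqrt (1 - t ^ 2) * g t) := by
    rw [hderiv, hcube]
    field_simp
    linear_combination ν ^ 2 * g t * hsq
  rw [hg] at hval
  simp only [hg]
  rw [hval]
  exact hfin

/-- Induction formula for the power series coefficients of t -> exp(-nu * arccos t). -/
theorem exp_arccos_power_series_coeffs (ν : ℝ) (hν : 0 < ν) (α : ℕ → ℝ)
    (hα : ∀ t ∈ Set.Ioo (-1 : ℝ) 1,
      HasSum (fun k : ℕ => α k * t ^ k) (Real.exp (-ν * Real.arccos t))) :
    α 0 = Real.exp (-ν * π / 2) ∧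
    α 1 = ν * Real.exp (-ν * π / 2) ∧
    ∀ k : ℕ, α (k + 2) = α k * (((k : ℝ) ^ 2 + ν ^ 2) / (((k : ℝ) + 1) * ((k : ℝ) + 2))) := by
  set g : ℝ → ℝ := fun u => Real.exp (-ν * Real.arccos u) with hgdef
  have h0mem : (0:ℝ) ∈ Set.Ioo (-1:ℝ) 1 := by norm_num
  have hg0 : g 0 = Real.exp (-ν * π / 2) := by
    simp [hgdef, Real.arccos_zero]
    ring_nf
  -- α 0
  have hA0 : α 0 = Real.exp (-ν * π / 2) := by
    have h0 := hα 0 h0mem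
    have hsingle : HasSum (fun k : ℕ => α k * (0:ℝ) ^ k) (α 0) := by
      have := hasSum_single (f := fun k : ℕ => α k * (0:ℝ) ^ k) 0
        (fun b hb => by simp [zero_pow hb])
      simpa using this
    have := h0.unique hsingle
    rw [← this, ← hg0]
  -- first derivative series
  have B := my_step α g hα
  -- α 1
  have hA1 : α 1 = ν * Real.exp (-ν * π / 2) := by
    have h0 := B 0 h0mem
    have hsingle : HasSum (fun k : ℕ => ((k:ℝ)+1) * α (k+1) * (0:ℝ) ^ k) (α 1) := by
      have := hasSum_single (f := fun k : ℕ => ((k:ℝ)+1) * α (k+1) * (0:ℝ) ^ k) 0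
        (fun b hb => by simp [zero_pow hb])
      simpa using this
    have hd0 : deriv g 0 = ν * Real.exp (-ν * π / 2) := by
      rw [(my_g1 ν 0 h0mem).deriv]
      simp [hgdef, Real.arccos_zero]
      ring_nf
      exact Or.inl trivial
    rw [← h0.unique hsingle, hd0]
  refine ⟨hA0, hA1, ?_⟩
  -- second derivative series
  have C := my_step (fun k => ((k:ℝ)+1) * α (k+1)) (deriv g) B
  set c : ℕ → ℝ :=
    fun k => ((k:ℝ)+1)*((k:ℝ)+2)*α (k+2) - ((k:ℝ)^2 + ν^2) * α k with hcdef
  have hczero : ∀ k, c k = 0 := by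
    apply my_zero
    intro t ht
    have h1t : (0:ℝ) < 1 - t ^ 2 := by nlinarith [ht.1, ht.2]
    have hB := B t ht
    have hC : HasSum (fun k : ℕ => (((k:ℝ)+1)*((k:ℝ)+2)*α (k+2)) * t ^ k)
        (deriv (deriv g) t) := by
      have := C t ht
      convert this using 2 with k
      push_cast
      ring
    have hw : HasSum (fun k : ℕ => ((k:ℝ)*((k:ℝ)-1)*α k) * t ^ k)
        (t ^ 2 * deriv (deriv g) t) := by
      have h1 := hC.mul_left (t ^ 2)
      have h2 : (fun k : ℕ => t ^ 2 * ((((k:ℝ)+1)*((k:ℝ)+2)*α (k+2)) * t ^ k))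
          = fun k : ℕ => (fun m : ℕ => ((m:ℝ)*((m:ℝ)-1)*α m) * t ^ m) (k + 2) := by
        funext k
        push_cast
        ring
      rw [h2] at h1
      have h3 := (hasSum_nat_add_iff (f := fun m : ℕ => ((m:ℝ)*((m:ℝ)-1)*α m) * t ^ m) 2).mp h1
      simpa [Finset.sum_range_succ] using h3
    have hu : HasSum (fun k : ℕ => ((k:ℝ)*α k) * t ^ k) (t * deriv g t) := by
      have h1 := hB.mul_left t
      have h2 : (fun k : ℕ => t * (((k:ℝ)+1) * α (k+1) * t ^ k))
          = fun k : ℕ => (fun m : ℕ => ((m:ℝ)*α m) * t ^ m) (k + 1) := by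
        funext k
        push_cast
        ring
      rw [h2] at h1
      have h3 := (hasSum_nat_add_iff (f := fun m : ℕ => ((m:ℝ)*α m) * t ^ m) 1).mp h1
      simpa [Finset.sum_range_succ] using h3
    have hfinal := (hC.sub hw).sub (hu.add ((hα t ht).mul_left (ν ^ 2)))
    have hode : deriv (deriv g) t - t ^ 2 * deriv (deriv g) t
        - (t * deriv g t + ν ^ 2 * g t) = 0 := by
      rw [(my_g2 ν t ht).deriv]
      simp only [hgdef, neg_mul]
      field_simp
      ring
    have h2 : (fun k : ℕ => (((k:ℝ)+1)*((k:ℝ)+2)*α (k+2)) * t ^ k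
        - ((k:ℝ)*((k:ℝ)-1)*α k) * t ^ k
        - (((k:ℝ)*α k) * t ^ k + ν ^ 2 * (α k * t ^ k)))
        = fun k : ℕ => c k * t ^ k := by
      funext k
      simp only [hcdef]
      ring
    rw [h2, hode] at hfinal
    exact hfinal
  intro k
  have hck := hczero k
  simp only [hcdef] at hck
  have hk1 : ((k:ℝ)+1) ≠ 0 := by positivity
  have hk2 : ((k:ℝ)+2) ≠ 0 := by positivity
  field_simp
  nlinarith [hck]
end
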